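/- arXiv:2211.13839 — 8 statements merged into one kernel-verified Lean document; each statement's English description precedes it below -/
import Mathlib

section
/- Let g_c : ℝ → ℝ be a density generator. Then for every z₁ ∈ ℝ, ∫_ℝ g_c(z₁² + z₂²) dz₂ = ∫_{|z₁|}^∞ [2 g_c(w²)/√(1 − z₁²/w²)] dw. Consequently, if (Z₁, Z₂) has joint density h(z₁,z₂) = g_c(z₁² + z₂²)/Z_{g_c} with Z_{g_c} := π ∫₀^∞ g_c(u) du, then the marginal density of Z₁ is z₁ ↦ [∫_{|z₁|}^∞ 2 g_c(w²)/√(1 − z₁²/w²) dw]/(π ∫₀^∞ g_c(u) du), and this marginal density is an even function of z₁. -/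
/-!
On the half-line `w > |z₁|` the substitution `z₂ = √(w² - z₁²)` has Jacobian
`w / √(w² - z₁²) = 1 / √(1 - z₁²/w²)`, which turns `2 ∫₀^∞ g (z₁² + z₂²) dz₂` into the stated
integral; the one-dimensional change of variables formula needs no integrability, so this holds
for every `g`. The marginal of `Z₁` is the joint density integrated in `z₂` (Tonelli), and since
the joint law is finite, a.e. inner integral is finite, so it agrees with the Bochner integral.
-/

open MeasureTheory Real Set

section Marginal

variable {α β : Type*} [MeasurableSpace α] [MeasurableSpace β] {μ : Measure α} {ν : Measure β}
  [SFinite μ] [SFinite ν]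

theorem map_fst_withDensity_prod {f : α × β → ENNReal} (hf : Measurable f) :
    ((μ.prod ν).withDensity f).map Prod.fst = μ.withDensity fun x => ∫⁻ y, f (x, y) ∂ν := by
  ext s hs
  rw [Measure.map_apply measurable_fst hs, withDensity_apply _ (measurable_fst hs),
    withDensity_apply _ hs, ← prod_univ, ← Measure.prod_restrict, Measure.restrict_univ,
    lintegral_prod _ hf.aemeasurable]

theorem map_fst_withDensity_ofReal_prod {f : α × β → ℝ} (hf : Measurable f)
    (hf_nonneg : ∀ z, 0 ≤ f z)
    [IsFiniteMeasure ((μ.prod ν).withDensity fun z => ENNReal.ofReal (f z))] :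
    ((μ.prod ν).withDensity fun z => ENNReal.ofReal (f z)).map Prod.fst
      = μ.withDensity fun x => ENNReal.ofReal (∫ y, f (x, y) ∂ν) := by
  have hf_int : Integrable f (μ.prod ν) := by
    refine ⟨hf.aestronglyMeasurable, ?_⟩
    rw [hasFiniteIntegral_iff_ofReal (ae_of_all _ hf_nonneg), ← setLIntegral_univ,
      ← withDensity_apply _ MeasurableSet.univ]
    exact measure_lt_top _ _
  rw [map_fst_withDensity_prod hf.ennreal_ofReal]
  refine withDensity_congr_ae ?_
  filter_upwards [hf_int.prod_right_ae] with x hx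
  exact (ofReal_integral_eq_lintegral_ofReal hx (ae_of_all _ fun y => hf_nonneg _)).symm

end Marginal

section SqrtSubstitution

variable {a w : ℝ}

lemma sq_lt_sq_of_abs_lt (h : |a| < w) : a ^ 2 < w ^ 2 :=
  sq_lt_sq.mpr (by rwa [abs_of_pos ((abs_nonneg a).trans_lt h)])

lemma hasDerivAt_sqrt_sq_sub_sq (h : a ^ 2 < w ^ 2) :
    HasDerivAt (fun w => √(w ^ 2 - a ^ 2)) (w / √(w ^ 2 - a ^ 2)) w := by
  have hsqrt : √(w ^ 2 - a ^ 2) ≠ 0 := (sqrt_pos.mpr (sub_pos.mpr h)).ne'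
  convert ((hasDerivAt_pow 2 w).sub_const (a ^ 2)).sqrt (sub_pos.mpr h).ne' using 1
  field_simp
  ring

lemma strictMonoOn_sqrt_sq_sub_sq : StrictMonoOn (fun w => √(w ^ 2 - a ^ 2)) (Ioi |a|) :=
  fun u hu v _ huv => sqrt_lt_sqrt (sub_nonneg.mpr (sq_lt_sq_of_abs_lt hu).le)
    (by gcongr; exact (abs_nonneg a).trans hu.le)

lemma image_sqrt_sq_sub_sq_Ioi : (fun w => √(w ^ 2 - a ^ 2)) '' Ioi |a| = Ioi 0 := by
  refine Subset.antisymm ?_ fun t (ht : 0 < t) => ⟨√(t ^ 2 + a ^ 2), ?_, ?_⟩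
  · rintro _ ⟨u, hu, rfl⟩
    exact sqrt_pos.mpr (sub_pos.mpr (sq_lt_sq_of_abs_lt hu))
  · rw [mem_Ioi, ← sqrt_sq_eq_abs]
    exact sqrt_lt_sqrt (sq_nonneg a) (by nlinarith)
  · simp only
    rw [sq_sqrt (by positivity), add_sub_cancel_right, sqrt_sq ht.le]

theorem integral_Ioi_comp_sqrt_sq_sub_sq {E : Type*} [NormedAddCommGroup E] [NormedSpace ℝ E]
    (a : ℝ) (F : ℝ → E) :
    ∫ w in Ioi |a|, (w / √(w ^ 2 - a ^ 2)) • F √(w ^ 2 - a ^ 2) = ∫ t in Ioi 0, F t := by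
  have hderiv : ∀ w ∈ Ioi |a|, HasDerivWithinAt (fun w => √(w ^ 2 - a ^ 2))
      (w / √(w ^ 2 - a ^ 2)) (Ioi |a|) w :=
    fun w hw => (hasDerivAt_sqrt_sq_sub_sq (sq_lt_sq_of_abs_lt hw)).hasDerivWithinAt
  rw [← image_sqrt_sq_sub_sq_Ioi (a := a), integral_image_eq_integral_abs_deriv_smul
    measurableSet_Ioi hderiv strictMonoOn_sqrt_sq_sub_sq.injOn]
  refine setIntegral_congr_fun measurableSet_Ioi fun w (hw : |a| < w) => ?_
  rw [abs_of_nonneg (div_nonneg ((abs_nonneg a).trans hw.le) (sqrt_nonneg _))]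

theorem integral_comp_sq_add_sq (g : ℝ → ℝ) (a : ℝ) :
    ∫ t, g (a ^ 2 + t ^ 2) = ∫ w in Ioi |a|, 2 * g (w ^ 2) / √(1 - a ^ 2 / w ^ 2) := by
  have heven : ∫ t, g (a ^ 2 + t ^ 2) = 2 * ∫ t in Ioi 0, g (a ^ 2 + t ^ 2) := by
    simp only [← integral_comp_abs (f := fun t => g (a ^ 2 + t ^ 2)), sq_abs]
  rw [heven, ← integral_Ioi_comp_sqrt_sq_sub_sq, ← integral_const_mul]
  refine setIntegral_congr_fun measurableSet_Ioi fun w (hw : |a| < w) => ?_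
  have hw0 : 0 < w := (abs_nonneg a).trans_lt hw
  have hpos : 0 < w ^ 2 - a ^ 2 := sub_pos.mpr (sq_lt_sq_of_abs_lt hw)
  have hsqrt : √(1 - a ^ 2 / w ^ 2) = √(w ^ 2 - a ^ 2) / w := by
    rw [← sqrt_sq hw0.le, ← sqrt_div' _ (sq_nonneg w), sqrt_sq hw0.le]
    congr 1
    field_simp
  rw [smul_eq_mul, sq_sqrt hpos.le, add_sub_cancel, hsqrt]
  have : √(w ^ 2 - a ^ 2) ≠ 0 := (sqrt_pos.mpr hpos).ne'
  field_simp

end SqrtSubstitution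

theorem marginal_density_of_joint_generator_general
    {Ω : Type*} [MeasurableSpace Ω] (P : Measure Ω) [IsProbabilityMeasure P]
    (g : ℝ → ℝ) (hg_meas : Measurable g) (hg_nonneg : ∀ x, 0 ≤ g x)
    (hg_pos : 0 < ∫ u in Ioi (0 : ℝ), g u)
    (Z₁ Z₂ : Ω → ℝ) (hZ₁ : Measurable Z₁) (hZ₂ : Measurable Z₂)
    (hjoint : Measure.map (fun ω => (Z₁ ω, Z₂ ω)) P
      = (volume : Measure (ℝ × ℝ)).withDensity
          (fun z => ENNReal.ofReal
            (g (z.1 ^ 2 + z.2 ^ 2) / (π * ∫ u in Ioi (0 : ℝ), g u)))) :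
    (∀ z₁ : ℝ, (∫ z₂ : ℝ, g (z₁ ^ 2 + z₂ ^ 2))
        = ∫ w in Ioi |z₁|, 2 * g (w ^ 2) / Real.sqrt (1 - z₁ ^ 2 / w ^ 2)) ∧
    (Measure.map Z₁ P
      = volume.withDensity (fun z₁ => ENNReal.ofReal
          ((∫ w in Ioi |z₁|, 2 * g (w ^ 2) / Real.sqrt (1 - z₁ ^ 2 / w ^ 2))
            / (π * ∫ u in Ioi (0 : ℝ), g u)))) ∧
    (∀ z₁ : ℝ,
        (∫ w in Ioi |(-z₁)|, 2 * g (w ^ 2) / Real.sqrt (1 - (-z₁) ^ 2 / w ^ 2))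
            / (π * ∫ u in Ioi (0 : ℝ), g u)
          = (∫ w in Ioi |z₁|, 2 * g (w ^ 2) / Real.sqrt (1 - z₁ ^ 2 / w ^ 2))
            / (π * ∫ u in Ioi (0 : ℝ), g u)) := by
  set C := π * ∫ u in Ioi (0 : ℝ), g u
  have hC : 0 ≤ C := (mul_pos pi_pos hg_pos).le
  have hpair : Measurable fun ω => (Z₁ ω, Z₂ ω) := hZ₁.prodMk hZ₂
  have : IsProbabilityMeasure ((volume : Measure (ℝ × ℝ)).withDensity
      fun z => ENNReal.ofReal (g (z.1 ^ 2 + z.2 ^ 2) / C)) :=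
    hjoint ▸ Measure.isProbabilityMeasure_map hpair.aemeasurable
  refine ⟨integral_comp_sq_add_sq g, ?_, fun z₁ => by simp only [abs_neg, neg_sq]⟩
  have hmarginal := map_fst_withDensity_ofReal_prod (μ := volume) (ν := volume)
    (by fun_prop : Measurable fun z : ℝ × ℝ => g (z.1 ^ 2 + z.2 ^ 2) / C)
    (fun z => div_nonneg (hg_nonneg _) hC)
  rw [← Measure.volume_eq_prod] at hmarginal
  simp only [integral_div, integral_comp_sq_add_sq] at hmarginal
  rw [← hjoint, Measure.map_map measurable_fst hpair] at hmarginal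
  exact hmarginal

/-- For a density generator `g`:
`∫_ℝ g (z₁² + z₂²) dz₂ = ∫_{|z₁|}^∞ 2 g (w²)/√(1 − z₁²/w²) dw`; consequently, if `(Z₁,Z₂)`
has joint density `g (z₁²+z₂²)/(π ∫₀^∞ g)`, then `Z₁` has the indicated marginal density,
which is an even function. -/
theorem marginal_density_of_joint_generator
    {Ω : Type*} [MeasurableSpace Ω] (P : Measure Ω) [IsProbabilityMeasure P]
    (g : ℝ → ℝ) (hg_meas : Measurable g) (hg_nonneg : ∀ x, 0 ≤ g x)
    (hg_pos : 0 < ∫ u in Ioi (0 : ℝ), g u) (hg_int : IntegrableOn g (Ioi 0))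
    (Z₁ Z₂ : Ω → ℝ) (hZ₁ : Measurable Z₁) (hZ₂ : Measurable Z₂)
    (hjoint : Measure.map (fun ω => (Z₁ ω, Z₂ ω)) P
      = (volume : Measure (ℝ × ℝ)).withDensity
          (fun z => ENNReal.ofReal
            (g (z.1 ^ 2 + z.2 ^ 2) / (π * ∫ u in Ioi (0 : ℝ), g u)))) :
    (∀ z₁ : ℝ, (∫ z₂ : ℝ, g (z₁ ^ 2 + z₂ ^ 2))
        = ∫ w in Ioi |z₁|, 2 * g (w ^ 2) / Real.sqrt (1 - z₁ ^ 2 / w ^ 2)) ∧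
    (Measure.map Z₁ P
      = volume.withDensity (fun z₁ => ENNReal.ofReal
          ((∫ w in Ioi |z₁|, 2 * g (w ^ 2) / Real.sqrt (1 - z₁ ^ 2 / w ^ 2))
            / (π * ∫ u in Ioi (0 : ℝ), g u)))) ∧
    (∀ z₁ : ℝ,
        (∫ w in Ioi |(-z₁)|, 2 * g (w ^ 2) / Real.sqrt (1 - (-z₁) ^ 2 / w ^ 2))
            / (π * ∫ u in Ioi (0 : ℝ), g u)
          = (∫ w in Ioi |z₁|, 2 * g (w ^ 2) / Real.sqrt (1 - z₁ ^ 2 / w ^ 2))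
            / (π * ∫ u in Ioi (0 : ℝ), g u)) :=
  marginal_density_of_joint_generator_general P g hg_meas hg_nonneg hg_pos Z₁ Z₂ hZ₁ hZ₂ hjoint
end

section
/- Let g_c : ℝ → ℝ be a density generator and let (Z₁, Z₂) be a random vector with joint density h(z₁,z₂) = g_c(z₁² + z₂²)/Z_{g_c}, where Z_{g_c} := π ∫₀^∞ g_c(u) du. Fix η₁, η₂, σ₁, σ₂ > 0 and ρ ∈ (−1,1), and define T₁ = η₁ exp(σ₁ Z₁) and T₂ = η₂ exp(σ₂ ρ Z₁ + σ₂ √(1−ρ²) Z₂). Then (T₁, T₂) has joint probability density f(t₁,t₂) = g_c((t̃₁² − 2ρ t̃₁ t̃₂ + t̃₂²)/(1−ρ²)) / (t₁ t₂ σ₁ σ₂ √(1−ρ²) Z_{g_c}) for t₁, t₂ > 0 (and 0 otherwise), where t̃ᵢ = (log tᵢ − log ηᵢ)/σᵢ. -/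
open MeasureTheory Real Set

/-- Standardized log-transform `t̃ = (log t − log η)/σ`. -/
noncomputable def logStd (η σ t : ℝ) : ℝ := (Real.log t - Real.log η) / σ

/-- The bivariate log-symmetric density `BLS(η₁,η₂,σ₁,σ₂,ρ; g)`. -/
noncomputable def blsDensity (g : ℝ → ℝ) (η₁ η₂ σ₁ σ₂ ρ : ℝ) (t : ℝ × ℝ) : ℝ :=
  if 0 < t.1 ∧ 0 < t.2 then
    g ((logStd η₁ σ₁ t.1 ^ 2 - 2 * ρ * logStd η₁ σ₁ t.1 * logStd η₂ σ₂ t.2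
        + logStd η₂ σ₂ t.2 ^ 2) / (1 - ρ ^ 2)) /
      (t.1 * t.2 * σ₁ * σ₂ * Real.sqrt (1 - ρ ^ 2) * (π * ∫ u in Ioi (0 : ℝ), g u))
  else 0

/-! `(T₁, T₂) = φ (Z₁, Z₂)` for the smooth injective map
`φ z = (η₁ e^{σ₁ z₁}, η₂ e^{σ₂ (ρ z₁ + √(1-ρ²) z₂)})` of `ℝ²` onto the open positive quadrant,
with inverse `t ↦ (t̃₁, (t̃₂ - ρ t̃₁) / √(1-ρ²))`. Its Jacobian determinant is
`t₁ t₂ σ₁ σ₂ √(1-ρ²)`, and at `t = φ z` the quadratic form `t̃₁² - 2ρ t̃₁ t̃₂ + t̃₂²` equals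
`(1-ρ²)(z₁² + z₂²)`. The change-of-variables formula therefore carries the spherical density of
`(Z₁, Z₂)` to the BLS density. -/

open scoped ENNReal

theorem map_withDensity_abs_det_fderiv_mul_comp {E : Type*} [NormedAddCommGroup E]
    [NormedSpace ℝ E] [FiniteDimensional ℝ E] [MeasurableSpace E] [BorelSpace E]
    (μ : Measure E) [μ.IsAddHaarMeasure] {f : E → E} {f' : E → E →L[ℝ] E}
    (hf' : ∀ x, HasFDerivAt f (f' x) x) (hf : Function.Injective f) {g : E → ℝ≥0∞}
    (hg : Function.support g ⊆ range f) :
    Measure.map f (μ.withDensity fun x => ENNReal.ofReal |(f' x).det| * g (f x)) =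
      μ.withDensity g := by
  have hf_meas : Measurable f :=
    (continuous_iff_continuousAt.2 fun x => (hf' x).continuousAt).measurable
  ext s hs
  rw [Measure.map_apply hf_meas hs, withDensity_apply _ (hf_meas hs), withDensity_apply _ hs,
    ← lintegral_image_eq_lintegral_abs_det_fderiv_mul μ (hf_meas hs)
      (fun x _ => (hf' x).hasFDerivWithinAt) hf.injOn, image_preimage_eq_inter_range,
    inter_comm, ← Measure.restrict_restrict' hs]
  exact setLIntegral_eq_of_support_subset hg

noncomputable def lowerTriangularCLM (a b d : ℝ) : ℝ × ℝ →L[ℝ] ℝ × ℝ :=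
  (a • ContinuousLinearMap.fst ℝ ℝ ℝ).prod
    (b • ContinuousLinearMap.fst ℝ ℝ ℝ + d • ContinuousLinearMap.snd ℝ ℝ ℝ)

theorem det_lowerTriangularCLM (a b d : ℝ) : (lowerTriangularCLM a b d).det = a * d := by
  rw [ContinuousLinearMap.det, ← LinearMap.det_toMatrix (Module.Basis.finTwoProd ℝ),
    Matrix.det_fin_two]
  simp [LinearMap.toMatrix_apply, lowerTriangularCLM]

noncomputable def blsRep (η₁ η₂ σ₁ σ₂ ρ : ℝ) (z : ℝ × ℝ) : ℝ × ℝ :=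
  (η₁ * exp (σ₁ * z.1), η₂ * exp (σ₂ * ρ * z.1 + σ₂ * √(1 - ρ ^ 2) * z.2))

noncomputable def blsRepInv (η₁ η₂ σ₁ σ₂ ρ : ℝ) (t : ℝ × ℝ) : ℝ × ℝ :=
  (logStd η₁ σ₁ t.1, (logStd η₂ σ₂ t.2 - ρ * logStd η₁ σ₁ t.1) / √(1 - ρ ^ 2))

noncomputable def blsRepFDeriv (η₁ η₂ σ₁ σ₂ ρ : ℝ) (z : ℝ × ℝ) : ℝ × ℝ →L[ℝ] ℝ × ℝ :=
  lowerTriangularCLM (σ₁ * (blsRep η₁ η₂ σ₁ σ₂ ρ z).1) (σ₂ * ρ * (blsRep η₁ η₂ σ₁ σ₂ ρ z).2)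
    (σ₂ * √(1 - ρ ^ 2) * (blsRep η₁ η₂ σ₁ σ₂ ρ z).2)

theorem measurable_blsRep (η₁ η₂ σ₁ σ₂ ρ : ℝ) : Measurable (blsRep η₁ η₂ σ₁ σ₂ ρ) := by
  unfold blsRep
  fun_prop

section
variable {η₁ η₂ σ₁ σ₂ ρ : ℝ}

theorem logStd_mul_exp {η σ : ℝ} (hη : 0 < η) (hσ : σ ≠ 0) (x : ℝ) :
    logStd η σ (η * exp (σ * x)) = x := by
  rw [logStd, log_mul hη.ne' (exp_pos _).ne', log_exp]
  field_simp
  ring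

theorem mul_exp_logStd {η σ t : ℝ} (hη : 0 < η) (hσ : σ ≠ 0) (ht : 0 < t) :
    η * exp (σ * logStd η σ t) = t := by
  rw [logStd, mul_div_cancel₀ _ hσ, exp_sub, exp_log ht, exp_log hη]
  field_simp

theorem logStd_blsRep_fst (hη₁ : 0 < η₁) (hσ₁ : σ₁ ≠ 0) (z : ℝ × ℝ) :
    logStd η₁ σ₁ (blsRep η₁ η₂ σ₁ σ₂ ρ z).1 = z.1 :=
  logStd_mul_exp hη₁ hσ₁ z.1

theorem logStd_blsRep_snd (hη₂ : 0 < η₂) (hσ₂ : σ₂ ≠ 0) (z : ℝ × ℝ) :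
    logStd η₂ σ₂ (blsRep η₁ η₂ σ₁ σ₂ ρ z).2 = ρ * z.1 + √(1 - ρ ^ 2) * z.2 := by
  have h : σ₂ * ρ * z.1 + σ₂ * √(1 - ρ ^ 2) * z.2 = σ₂ * (ρ * z.1 + √(1 - ρ ^ 2) * z.2) := by
    ring
  rw [blsRep, h, logStd_mul_exp hη₂ hσ₂]

theorem blsRepInv_blsRep (hη₁ : 0 < η₁) (hη₂ : 0 < η₂) (hσ₁ : σ₁ ≠ 0) (hσ₂ : σ₂ ≠ 0)
    (hρ : 0 < 1 - ρ ^ 2) (z : ℝ × ℝ) :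
    blsRepInv η₁ η₂ σ₁ σ₂ ρ (blsRep η₁ η₂ σ₁ σ₂ ρ z) = z := by
  have hc : √(1 - ρ ^ 2) ≠ 0 := (sqrt_pos.2 hρ).ne'
  rw [blsRepInv, logStd_blsRep_fst hη₁ hσ₁, logStd_blsRep_snd hη₂ hσ₂, add_sub_cancel_left,
    mul_div_cancel_left₀ _ hc]

theorem blsRep_blsRepInv (hη₁ : 0 < η₁) (hη₂ : 0 < η₂) (hσ₁ : σ₁ ≠ 0) (hσ₂ : σ₂ ≠ 0)
    (hρ : 0 < 1 - ρ ^ 2) {t : ℝ × ℝ} (ht₁ : 0 < t.1) (ht₂ : 0 < t.2) :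
    blsRep η₁ η₂ σ₁ σ₂ ρ (blsRepInv η₁ η₂ σ₁ σ₂ ρ t) = t := by
  have hc : √(1 - ρ ^ 2) ≠ 0 := (sqrt_pos.2 hρ).ne'
  have h : σ₂ * ρ * logStd η₁ σ₁ t.1 +
      σ₂ * √(1 - ρ ^ 2) * ((logStd η₂ σ₂ t.2 - ρ * logStd η₁ σ₁ t.1) / √(1 - ρ ^ 2)) =
      σ₂ * logStd η₂ σ₂ t.2 := by
    field_simp
    ring
  simp only [blsRep, blsRepInv, h, mul_exp_logStd hη₁ hσ₁ ht₁, mul_exp_logStd hη₂ hσ₂ ht₂]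

theorem hasFDerivAt_blsRep (z : ℝ × ℝ) :
    HasFDerivAt (blsRep η₁ η₂ σ₁ σ₂ ρ) (blsRepFDeriv η₁ η₂ σ₁ σ₂ ρ z) z := by
  have h₁ := ((hasFDerivAt_fst.const_mul σ₁).exp.const_mul η₁ : HasFDerivAt
    (fun z : ℝ × ℝ => η₁ * exp (σ₁ * z.1)) _ z)
  have h₂ := (((hasFDerivAt_fst (p := z)).const_mul (σ₂ * ρ)).add
    ((hasFDerivAt_snd (p := z)).const_mul (σ₂ * √(1 - ρ ^ 2)))).exp.const_mul η₂
  refine (h₁.prodMk h₂).congr_fderiv ?_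
  ext <;>
    simp only [Pi.add_apply, smul_add, ContinuousLinearMap.comp_apply,
      ContinuousLinearMap.inl_apply, ContinuousLinearMap.inr_apply,
      ContinuousLinearMap.prod_apply, smul_apply, ContinuousLinearMap.coe_fst', smul_eq_mul,
      add_apply, ContinuousLinearMap.coe_snd', mul_one, mul_zero, add_zero, zero_add,
      blsRepFDeriv, lowerTriangularCLM, blsRep] <;>
    ring

theorem det_blsRepFDeriv (z : ℝ × ℝ) :
    (blsRepFDeriv η₁ η₂ σ₁ σ₂ ρ z).det =
      (blsRep η₁ η₂ σ₁ σ₂ ρ z).1 * (blsRep η₁ η₂ σ₁ σ₂ ρ z).2 * σ₁ * σ₂ * √(1 - ρ ^ 2) := by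
  rw [blsRepFDeriv, det_lowerTriangularCLM]
  ring

theorem blsRep_pos (hη₁ : 0 < η₁) (hη₂ : 0 < η₂) (z : ℝ × ℝ) :
    0 < (blsRep η₁ η₂ σ₁ σ₂ ρ z).1 ∧ 0 < (blsRep η₁ η₂ σ₁ σ₂ ρ z).2 :=
  ⟨mul_pos hη₁ (exp_pos _), mul_pos hη₂ (exp_pos _)⟩

theorem blsDensity_blsRep (g : ℝ → ℝ) (hη₁ : 0 < η₁) (hη₂ : 0 < η₂) (hσ₁ : σ₁ ≠ 0)
    (hσ₂ : σ₂ ≠ 0) (hρ : 0 < 1 - ρ ^ 2) (z : ℝ × ℝ) :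
    blsDensity g η₁ η₂ σ₁ σ₂ ρ (blsRep η₁ η₂ σ₁ σ₂ ρ z) =
      g (z.1 ^ 2 + z.2 ^ 2) / ((blsRep η₁ η₂ σ₁ σ₂ ρ z).1 * (blsRep η₁ η₂ σ₁ σ₂ ρ z).2 * σ₁ *
        σ₂ * √(1 - ρ ^ 2) * (π * ∫ u in Ioi (0 : ℝ), g u)) := by
  have hquad : (z.1 ^ 2 - 2 * ρ * z.1 * (ρ * z.1 + √(1 - ρ ^ 2) * z.2) +
      (ρ * z.1 + √(1 - ρ ^ 2) * z.2) ^ 2) / (1 - ρ ^ 2) = z.1 ^ 2 + z.2 ^ 2 := by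
    rw [div_eq_iff hρ.ne']
    linear_combination z.2 ^ 2 * sq_sqrt hρ.le
  rw [blsDensity, if_pos (blsRep_pos hη₁ hη₂ z), logStd_blsRep_fst hη₁ hσ₁,
    logStd_blsRep_snd hη₂ hσ₂, hquad]

theorem abs_det_blsRepFDeriv_mul_blsDensity_blsRep (g : ℝ → ℝ) (hη₁ : 0 < η₁) (hη₂ : 0 < η₂)
    (hσ₁ : 0 < σ₁) (hσ₂ : 0 < σ₂) (hρ : 0 < 1 - ρ ^ 2) (z : ℝ × ℝ) :
    |(blsRepFDeriv η₁ η₂ σ₁ σ₂ ρ z).det| * blsDensity g η₁ η₂ σ₁ σ₂ ρ (blsRep η₁ η₂ σ₁ σ₂ ρ z) =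
      g (z.1 ^ 2 + z.2 ^ 2) / (π * ∫ u in Ioi (0 : ℝ), g u) := by
  obtain ⟨ht₁, ht₂⟩ := blsRep_pos (σ₁ := σ₁) (σ₂ := σ₂) (ρ := ρ) hη₁ hη₂ z
  have hdet : 0 < (blsRepFDeriv η₁ η₂ σ₁ σ₂ ρ z).det := by
    rw [det_blsRepFDeriv]
    have := sqrt_pos.2 hρ
    positivity
  rw [blsDensity_blsRep g hη₁ hη₂ hσ₁.ne' hσ₂.ne' hρ, abs_of_pos hdet, mul_div_assoc',
    ← det_blsRepFDeriv, mul_div_mul_left _ _ hdet.ne']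

theorem support_blsDensity_subset_range_blsRep (g : ℝ → ℝ) (hη₁ : 0 < η₁) (hη₂ : 0 < η₂)
    (hσ₁ : σ₁ ≠ 0) (hσ₂ : σ₂ ≠ 0) (hρ : 0 < 1 - ρ ^ 2) :
    Function.support (blsDensity g η₁ η₂ σ₁ σ₂ ρ) ⊆ range (blsRep η₁ η₂ σ₁ σ₂ ρ) := by
  intro t ht
  by_cases hpos : 0 < t.1 ∧ 0 < t.2
  · exact ⟨_, blsRep_blsRepInv hη₁ hη₂ hσ₁ hσ₂ hρ hpos.1 hpos.2⟩
  · exact absurd (if_neg hpos) ht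

end

theorem bls_density_of_stochastic_representation_general
    {Ω : Type*} [MeasurableSpace Ω] (P : Measure Ω)
    (g : ℝ → ℝ)
    (Z₁ Z₂ : Ω → ℝ) (hZ₁ : Measurable Z₁) (hZ₂ : Measurable Z₂)
    (hjoint : Measure.map (fun ω => (Z₁ ω, Z₂ ω)) P
      = (volume : Measure (ℝ × ℝ)).withDensity
          (fun z => ENNReal.ofReal
            (g (z.1 ^ 2 + z.2 ^ 2) / (π * ∫ u in Ioi (0 : ℝ), g u))))
    (η₁ η₂ σ₁ σ₂ ρ : ℝ) (hη₁ : 0 < η₁) (hη₂ : 0 < η₂) (hσ₁ : 0 < σ₁) (hσ₂ : 0 < σ₂)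
    (hρ : ρ ∈ Ioo (-1 : ℝ) 1) :
    Measure.map (fun ω => (η₁ * Real.exp (σ₁ * Z₁ ω),
        η₂ * Real.exp (σ₂ * ρ * Z₁ ω + σ₂ * Real.sqrt (1 - ρ ^ 2) * Z₂ ω))) P
      = (volume : Measure (ℝ × ℝ)).withDensity
          (fun t => ENNReal.ofReal (blsDensity g η₁ η₂ σ₁ σ₂ ρ t)) := by
  have hρ' : 0 < 1 - ρ ^ 2 := by nlinarith [hρ.1, hρ.2]
  have hmap : Measure.map (fun ω => (η₁ * Real.exp (σ₁ * Z₁ ω),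
        η₂ * Real.exp (σ₂ * ρ * Z₁ ω + σ₂ * Real.sqrt (1 - ρ ^ 2) * Z₂ ω))) P =
      Measure.map (blsRep η₁ η₂ σ₁ σ₂ ρ) (Measure.map (fun ω => (Z₁ ω, Z₂ ω)) P) :=
    (Measure.map_map (measurable_blsRep η₁ η₂ σ₁ σ₂ ρ) (hZ₁.prodMk hZ₂)).symm
  have hinj : Function.Injective (blsRep η₁ η₂ σ₁ σ₂ ρ) :=
    Function.LeftInverse.injective (blsRepInv_blsRep hη₁ hη₂ hσ₁.ne' hσ₂.ne' hρ')
  have hsupp : Function.support (fun t => ENNReal.ofReal (blsDensity g η₁ η₂ σ₁ σ₂ ρ t)) ⊆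
      range (blsRep η₁ η₂ σ₁ σ₂ ρ) :=
    (Function.support_comp_subset ENNReal.ofReal_zero _).trans
      (support_blsDensity_subset_range_blsRep g hη₁ hη₂ hσ₁.ne' hσ₂.ne' hρ')
  rw [← map_withDensity_abs_det_fderiv_mul_comp volume hasFDerivAt_blsRep hinj hsupp, hmap,
    hjoint]
  simp_rw [← ENNReal.ofReal_mul (abs_nonneg _),
    abs_det_blsRepFDeriv_mul_blsDensity_blsRep g hη₁ hη₂ hσ₁ hσ₂ hρ']

/-- If `(Z₁,Z₂)` has joint density `g (z₁²+z₂²)/Z_g` with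
`Z_g = π ∫₀^∞ g`, then `(T₁,T₂) = (η₁ e^{σ₁ Z₁}, η₂ e^{σ₂ρ Z₁ + σ₂√(1−ρ²) Z₂})` has the
`BLS(η₁,η₂,σ₁,σ₂,ρ; g)` joint density. -/
theorem bls_density_of_stochastic_representation
    {Ω : Type*} [MeasurableSpace Ω] (P : Measure Ω) [IsProbabilityMeasure P]
    (g : ℝ → ℝ) (hg_meas : Measurable g) (hg_nonneg : ∀ x, 0 ≤ g x)
    (hg_pos : 0 < ∫ u in Ioi (0 : ℝ), g u) (hg_int : IntegrableOn g (Ioi 0))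
    (Z₁ Z₂ : Ω → ℝ) (hZ₁ : Measurable Z₁) (hZ₂ : Measurable Z₂)
    (hjoint : Measure.map (fun ω => (Z₁ ω, Z₂ ω)) P
      = (volume : Measure (ℝ × ℝ)).withDensity
          (fun z => ENNReal.ofReal
            (g (z.1 ^ 2 + z.2 ^ 2) / (π * ∫ u in Ioi (0 : ℝ), g u))))
    (η₁ η₂ σ₁ σ₂ ρ : ℝ) (hη₁ : 0 < η₁) (hη₂ : 0 < η₂) (hσ₁ : 0 < σ₁) (hσ₂ : 0 < σ₂)
    (hρ : ρ ∈ Ioo (-1 : ℝ) 1) :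
    Measure.map (fun ω => (η₁ * Real.exp (σ₁ * Z₁ ω),
        η₂ * Real.exp (σ₂ * ρ * Z₁ ω + σ₂ * Real.sqrt (1 - ρ ^ 2) * Z₂ ω))) P
      = (volume : Measure (ℝ × ℝ)).withDensity
          (fun t => ENNReal.ofReal (blsDensity g η₁ η₂ σ₁ σ₂ ρ t)) :=
  bls_density_of_stochastic_representation_general P g Z₁ Z₂ hZ₁ hZ₂ hjoint η₁ η₂ σ₁ σ₂ ρ hη₁ hη₂
    hσ₁ hσ₂ hρ
end

section
/- Let g_c : ℝ → ℝ be a density generator, let f be the BLS(η₁,η₂,σ₁,σ₂,ρ; g_c) density and h(z₁,z₂) = g_c(z₁² + z₂²)/Z_{g_c}. Let B ⊆ (0,∞) be a Borel set, and for t₁ > 0 define B_ρ(t₁) = { ((log b − log η₂)/σ₂ − ρ t̃₁)/√(1−ρ²) : b ∈ B } and B₀ = { (log b − log η₂)/σ₂ : b ∈ B }. Then for every t₁ > 0: (i) ∫_B f(t₁, t₂) dt₂ = (1/(σ₁ t₁)) ∫_{B_ρ(t₁)} h(t̃₁, w) dw; (ii) ∫₀^∞ ∫_B f(s, t₂) dt₂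 ds = ∫_{{(z₁,z₂) ∈ ℝ² : ρ z₁ + √(1−ρ²) z₂ ∈ B₀}} h(z₁, z₂) dz₁ dz₂; and hence (iii) if the quantity in (ii) is positive, the conditional density of T₁ given T₂ ∈ B equals t₁ ↦ (1/(σ₁ t₁)) ∫_{B_ρ(t₁)} h(t̃₁, w) dw divided by ∫_{{(z₁,z₂) : ρ z₁ + √(1−ρ²) z₂ ∈ B₀}} h(z₁, z₂) dz₁ dz₂. -/
open MeasureTheory Real Set

/-- The normalized joint density `h(z₁,z₂) = g (z₁²+z₂²)/(π ∫₀^∞ g)`. -/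
noncomputable def stdJointDensity (g : ℝ → ℝ) (z₁ z₂ : ℝ) : ℝ :=
  g (z₁ ^ 2 + z₂ ^ 2) / (π * ∫ u in Ioi (0 : ℝ), g u)

/-! In the coordinates `z₁ = t̃₁`, `t̃₂ = ρ z₁ + √(1-ρ²) z₂` the quadratic form of the BLS density
becomes `z₁² + z₂²`, and `dt₁ dt₂ / (t₁ t₂ σ₁ σ₂ √(1-ρ²)) = dz₁ dz₂`. Changing variables in the
inner integral alone gives (i); integrating (i) over `t₁` with the substitution `t₁ ↦ t̃₁` and
reading the resulting iterated integral through Fubini gives (ii). Fubini applies because, in polar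
coordinates, integrability of `h` on `ℝ²` reduces to that of `r ↦ r g(r²)` on `(0, ∞)`, i.e.
(substituting `u = r²`) to that of `g`. (iii) is the quotient of (i) by (ii). -/

theorem integrable_comp_sq_add_sq {E : Type*} [NormedAddCommGroup E] [NormedSpace ℝ E]
    {g : ℝ → E} (hg : IntegrableOn g (Ioi 0)) :
    Integrable (fun z : ℝ × ℝ => g (z.1 ^ 2 + z.2 ^ 2)) := by
  have hradial : IntegrableOn (fun r : ℝ => r • g (r ^ 2)) (Ioi 0) := by
    refine ((integrableOn_Ioi_comp_rpow_iff' g two_ne_zero).2 hg).congr_fun (fun r _ => ?_)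
      measurableSet_Ioi
    simp only [Real.rpow_two, show (2 : ℝ) - 1 = 1 by norm_num, Real.rpow_one]
  have hL2 : Integrable (fun x : WithLp 2 (ℝ × ℝ) => g (‖x‖ ^ 2)) := by
    refine (integrable_fun_norm_addHaar volume (f := fun r => g (r ^ 2))).2 ?_
    simpa [(WithLp.linearEquiv 2 ℝ (ℝ × ℝ)).finrank_eq] using hradial
  refine ((WithLp.volume_preserving_toLp ℝ ℝ).integrable_comp_of_integrable hL2).congr
    (ae_of_all _ fun z => ?_)
  simp [WithLp.prod_norm_sq_eq_of_L2]

theorem setIntegral_eq_integral_setIntegral_prodMk {α β E : Type*} [MeasurableSpace α]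
    [MeasurableSpace β] [NormedAddCommGroup E] [NormedSpace ℝ E] {μ : Measure α} {ν : Measure β}
    [SFinite μ] [SFinite ν] {S : Set (α × β)} (hS : MeasurableSet S) {F : α × β → E}
    (hF : Integrable F (μ.prod ν)) :
    ∫ z in S, F z ∂μ.prod ν = ∫ x, ∫ y in Prod.mk x ⁻¹' S, F (x, y) ∂ν ∂μ := by
  rw [← integral_indicator hS, integral_prod _ (hF.indicator hS)]
  refine integral_congr_ae (ae_of_all _ fun x => ?_)
  exact integral_indicator (f := fun y => F (x, y)) (measurable_prodMk_left hS)

section LogAffine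

variable {d : ℝ}

theorem injOn_log_sub_div (c : ℝ) (hd : d ≠ 0) :
    InjOn (fun b => (Real.log b - c) / d) (Ioi 0) := by
  intro x hx y hy hxy
  refine Real.log_injOn_pos hx hy ?_
  simpa [div_left_inj' hd] using hxy

theorem image_Ioi_log_sub_div (c : ℝ) (hd : d ≠ 0) :
    (fun b => (Real.log b - c) / d) '' Ioi 0 = univ := by
  refine eq_univ_of_forall fun z => ⟨Real.exp (c + d * z), Real.exp_pos _, ?_⟩
  field_simp
  rw [Real.log_exp]
  ring

theorem MeasurableSet.image_log_sub_div {B : Set ℝ} (hB : MeasurableSet B) (hBpos : B ⊆ Ioi 0)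
    (c : ℝ) (hd : d ≠ 0) : MeasurableSet ((fun b => (Real.log b - c) / d) '' B) :=
  hB.image_of_continuousOn_injOn
    (((continuousOn_log.mono fun _ hb => (hBpos hb).ne').sub continuousOn_const).div_const d)
    ((injOn_log_sub_div c hd).mono hBpos)

theorem integral_image_log_sub_div {E : Type*} [NormedAddCommGroup E] [NormedSpace ℝ E]
    {B : Set ℝ} (hB : MeasurableSet B) (hBpos : B ⊆ Ioi 0) (c : ℝ) (hd : 0 < d) (F : ℝ → E) :
    ∫ w in (fun b => (Real.log b - c) / d) '' B, F w
      = ∫ b in B, (d * b)⁻¹ • F ((Real.log b - c) / d) := by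
  have hderiv : ∀ b ∈ B, HasDerivWithinAt (fun b => (Real.log b - c) / d) (b⁻¹ / d) B b :=
    fun b hb => (((Real.hasDerivAt_log (hBpos hb).ne').sub_const c).div_const d).hasDerivWithinAt
  rw [integral_image_eq_integral_abs_deriv_smul hB hderiv
    ((injOn_log_sub_div c hd.ne').mono hBpos)]
  refine setIntegral_congr_fun hB fun b hb => ?_
  have hb0 : 0 < b := hBpos hb
  rw [abs_of_pos (by positivity), div_eq_inv_mul, mul_inv]

end LogAffine

theorem setOf_add_mul_mem_image {α : Type*} (f : α → ℝ) (B : Set α) (a : ℝ) {s : ℝ}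
    (hs : s ≠ 0) : {w : ℝ | a + s * w ∈ f '' B} = (fun b => (f b - a) / s) '' B := by
  ext w
  constructor
  · rintro ⟨b, hb, hbw⟩
    exact ⟨b, hb, by simp only [hbw]; field_simp; ring⟩
  · rintro ⟨b, hb, rfl⟩
    exact ⟨b, hb, by field_simp; ring⟩

theorem quadForm_div_one_sub_sq {ρ : ℝ} (hρ : ρ ^ 2 < 1) (a w : ℝ) :
    (a ^ 2 - 2 * ρ * a * (ρ * a + √(1 - ρ ^ 2) * w) + (ρ * a + √(1 - ρ ^ 2) * w) ^ 2)
      / (1 - ρ ^ 2) = a ^ 2 + w ^ 2 := by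
  have hs : √(1 - ρ ^ 2) ^ 2 = 1 - ρ ^ 2 := Real.sq_sqrt (by linarith)
  rw [div_eq_iff (by linarith)]
  linear_combination w ^ 2 * hs

theorem setIntegral_blsDensity_slice (g : ℝ → ℝ) (η₁ η₂ σ₁ : ℝ) {σ₂ ρ : ℝ} (hσ₂ : 0 < σ₂)
    (hρ : ρ ^ 2 < 1) {B : Set ℝ} (hB : MeasurableSet B) (hBpos : B ⊆ Ioi 0) {t₁ : ℝ}
    (ht₁ : 0 < t₁) :
    ∫ t₂ in B, blsDensity g η₁ η₂ σ₁ σ₂ ρ (t₁, t₂)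
      = (1 / (σ₁ * t₁)) *
        ∫ w in (fun b => ((Real.log b - Real.log η₂) / σ₂ - ρ * logStd η₁ σ₁ t₁)
            / √(1 - ρ ^ 2)) '' B,
          stdJointDensity g (logStd η₁ σ₁ t₁) w := by
  set a := logStd η₁ σ₁ t₁
  set s := √(1 - ρ ^ 2)
  have hs : 0 < s := Real.sqrt_pos.2 (by linarith)
  have himage : (fun b => ((Real.log b - Real.log η₂) / σ₂ - ρ * a) / s)
      = fun b => (Real.log b - (Real.log η₂ + σ₂ * (ρ * a))) / (σ₂ * s) := by
    funext b
    field_simp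
    ring
  rw [himage, integral_image_log_sub_div hB hBpos _ (by positivity), ← integral_const_mul]
  refine setIntegral_congr_fun hB fun b hb => ?_
  set w := (Real.log b - (Real.log η₂ + σ₂ * (ρ * a))) / (σ₂ * s)
  have hlog : logStd η₂ σ₂ b = ρ * a + s * w := by
    simp only [logStd, w]
    field_simp
    ring
  simp only [blsDensity, stdJointDensity, smul_eq_mul]
  rw [if_pos ⟨ht₁, hBpos hb⟩, hlog, quadForm_div_one_sub_sq hρ]
  ring

theorem integral_setIntegral_blsDensity {g : ℝ → ℝ} (hg : IntegrableOn g (Ioi 0))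
    (η₁ η₂ : ℝ) {σ₁ σ₂ ρ : ℝ} (hσ₁ : 0 < σ₁) (hσ₂ : 0 < σ₂) (hρ : ρ ^ 2 < 1)
    {B : Set ℝ} (hB : MeasurableSet B) (hBpos : B ⊆ Ioi 0) :
    ∫ t₁ in Ioi 0, ∫ t₂ in B, blsDensity g η₁ η₂ σ₁ σ₂ ρ (t₁, t₂)
      = ∫ z in {z : ℝ × ℝ | ρ * z.1 + √(1 - ρ ^ 2) * z.2
            ∈ (fun b => (Real.log b - Real.log η₂) / σ₂) '' B},
          stdJointDensity g z.1 z.2 := by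
  set S := {z : ℝ × ℝ | ρ * z.1 + √(1 - ρ ^ 2) * z.2
    ∈ (fun b => (Real.log b - Real.log η₂) / σ₂) '' B}
  have hS : MeasurableSet S :=
    (hB.image_log_sub_div hBpos _ hσ₂.ne').preimage (by fun_prop)
  have hh : Integrable (fun z : ℝ × ℝ => stdJointDensity g z.1 z.2) :=
    (integrable_comp_sq_add_sq hg).div_const _
  set G := fun z₁ => ∫ z₂ in Prod.mk z₁ ⁻¹' S, stdJointDensity g z₁ z₂
  have hs : √(1 - ρ ^ 2) ≠ 0 := (Real.sqrt_pos.2 (by linarith)).ne'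
  calc ∫ t₁ in Ioi 0, ∫ t₂ in B, blsDensity g η₁ η₂ σ₁ σ₂ ρ (t₁, t₂)
      = ∫ t₁ in Ioi 0, (σ₁ * t₁)⁻¹ • G (logStd η₁ σ₁ t₁) := by
        refine setIntegral_congr_fun measurableSet_Ioi fun t₁ ht₁ => ?_
        rw [setIntegral_blsDensity_slice g η₁ η₂ σ₁ hσ₂ hρ hB hBpos ht₁, one_div, smul_eq_mul,
          ← setOf_add_mul_mem_image (fun b => (Real.log b - Real.log η₂) / σ₂) B _ hs]
        rfl
    _ = ∫ z₁, G z₁ := by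
        have := integral_image_log_sub_div measurableSet_Ioi subset_rfl (Real.log η₁) hσ₁ G
        rw [image_Ioi_log_sub_div _ hσ₁.ne', Measure.restrict_univ] at this
        exact this.symm
    _ = ∫ z in S, stdJointDensity g z.1 z.2 :=
        (setIntegral_eq_integral_setIntegral_prodMk hS hh).symm

theorem bls_conditional_density_given_set_general
    (g : ℝ → ℝ) (hg_int : IntegrableOn g (Ioi 0))
    (η₁ η₂ σ₁ σ₂ ρ : ℝ) (hσ₁ : 0 < σ₁) (hσ₂ : 0 < σ₂)
    (hρ : ρ ∈ Ioo (-1 : ℝ) 1)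
    (B : Set ℝ) (hB : MeasurableSet B) (hBsub : B ⊆ Ioi 0) :
    (∀ t₁ : ℝ, 0 < t₁ →
        (∫ t₂ in B, blsDensity g η₁ η₂ σ₁ σ₂ ρ (t₁, t₂))
          = (1 / (σ₁ * t₁)) *
            ∫ w in (fun b => ((Real.log b - Real.log η₂) / σ₂ - ρ * logStd η₁ σ₁ t₁)
                / Real.sqrt (1 - ρ ^ 2)) '' B,
              stdJointDensity g (logStd η₁ σ₁ t₁) w) ∧
    ((∫ s in Ioi (0 : ℝ), ∫ t₂ in B, blsDensity g η₁ η₂ σ₁ σ₂ ρ (s, t₂))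
        = ∫ z in {z : ℝ × ℝ | ρ * z.1 + Real.sqrt (1 - ρ ^ 2) * z.2
              ∈ (fun b => (Real.log b - Real.log η₂) / σ₂) '' B},
            stdJointDensity g z.1 z.2) ∧
    (0 < (∫ s in Ioi (0 : ℝ), ∫ t₂ in B, blsDensity g η₁ η₂ σ₁ σ₂ ρ (s, t₂)) →
      ∀ t₁ : ℝ, 0 < t₁ →
        (∫ t₂ in B, blsDensity g η₁ η₂ σ₁ σ₂ ρ (t₁, t₂))
            / (∫ s in Ioi (0 : ℝ), ∫ t₂ in B, blsDensity g η₁ η₂ σ₁ σ₂ ρ (s, t₂))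
          = ((1 / (σ₁ * t₁)) *
              ∫ w in (fun b => ((Real.log b - Real.log η₂) / σ₂ - ρ * logStd η₁ σ₁ t₁)
                  / Real.sqrt (1 - ρ ^ 2)) '' B,
                stdJointDensity g (logStd η₁ σ₁ t₁) w)
            / ∫ z in {z : ℝ × ℝ | ρ * z.1 + Real.sqrt (1 - ρ ^ 2) * z.2
                  ∈ (fun b => (Real.log b - Real.log η₂) / σ₂) '' B},
                stdJointDensity g z.1 z.2) := by
  have hρ2 : ρ ^ 2 < 1 := by nlinarith [hρ.1, hρ.2]
  have hslice := fun t₁ (ht₁ : 0 < t₁) =>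
    setIntegral_blsDensity_slice g η₁ η₂ σ₁ hσ₂ hρ2 hB hBsub ht₁
  have htotal := integral_setIntegral_blsDensity hg_int η₁ η₂ hσ₁ hσ₂ hρ2 hB hBsub
  exact ⟨hslice, htotal, fun _ t₁ ht₁ => by rw [hslice t₁ ht₁, htotal]⟩

/-- Conditional density of `T₁` given `T₂ ∈ B` for a BLS distribution. -/
theorem bls_conditional_density_given_set
    (g : ℝ → ℝ) (hg_meas : Measurable g) (hg_nonneg : ∀ x, 0 ≤ g x)
    (hg_pos : 0 < ∫ u in Ioi (0 : ℝ), g u) (hg_int : IntegrableOn g (Ioi 0))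
    (η₁ η₂ σ₁ σ₂ ρ : ℝ) (hη₁ : 0 < η₁) (hη₂ : 0 < η₂) (hσ₁ : 0 < σ₁) (hσ₂ : 0 < σ₂)
    (hρ : ρ ∈ Ioo (-1 : ℝ) 1)
    (B : Set ℝ) (hB : MeasurableSet B) (hBsub : B ⊆ Ioi 0) :
    (∀ t₁ : ℝ, 0 < t₁ →
        (∫ t₂ in B, blsDensity g η₁ η₂ σ₁ σ₂ ρ (t₁, t₂))
          = (1 / (σ₁ * t₁)) *
            ∫ w in (fun b => ((Real.log b - Real.log η₂) / σ₂ - ρ * logStd η₁ σ₁ t₁)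
                / Real.sqrt (1 - ρ ^ 2)) '' B,
              stdJointDensity g (logStd η₁ σ₁ t₁) w) ∧
    ((∫ s in Ioi (0 : ℝ), ∫ t₂ in B, blsDensity g η₁ η₂ σ₁ σ₂ ρ (s, t₂))
        = ∫ z in {z : ℝ × ℝ | ρ * z.1 + Real.sqrt (1 - ρ ^ 2) * z.2
              ∈ (fun b => (Real.log b - Real.log η₂) / σ₂) '' B},
            stdJointDensity g z.1 z.2) ∧
    (0 < (∫ s in Ioi (0 : ℝ), ∫ t₂ in B, blsDensity g η₁ η₂ σ₁ σ₂ ρ (s, t₂)) →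
      ∀ t₁ : ℝ, 0 < t₁ →
        (∫ t₂ in B, blsDensity g η₁ η₂ σ₁ σ₂ ρ (t₁, t₂))
            / (∫ s in Ioi (0 : ℝ), ∫ t₂ in B, blsDensity g η₁ η₂ σ₁ σ₂ ρ (s, t₂))
          = ((1 / (σ₁ * t₁)) *
              ∫ w in (fun b => ((Real.log b - Real.log η₂) / σ₂ - ρ * logStd η₁ σ₁ t₁)
                  / Real.sqrt (1 - ρ ^ 2)) '' B,
                stdJointDensity g (logStd η₁ σ₁ t₁) w)
            / ∫ z in {z : ℝ × ℝ | ρ * z.1 + Real.sqrt (1 - ρ ^ 2) * z.2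
                  ∈ (fun b => (Real.log b - Real.log η₂) / σ₂) '' B},
                stdJointDensity g z.1 z.2) :=
  bls_conditional_density_given_set_general g hg_int η₁ η₂ σ₁ σ₂ ρ hσ₁ hσ₂ hρ B hB hBsub
end

section
/- Let φ(x) = exp(−x²/2)/√(2π) be the standard normal density and for a Borel set C ⊆ ℝ write Φ(C) = ∫_C φ(x) dx. Let f be the BLS(η₁,η₂,σ₁,σ₂,ρ; g_c) density with Gaussian generator g_c(x) = exp(−x/2) (so Z_{g_c} = 2π). Let B ⊆ (0,∞) be a Borel set with ∫₀^∞ ∫_B f(s,t₂) dt₂ ds > 0, and for t₁ > 0 define B_ρ(t₁) = { ((log b − log η₂)/σ₂ − ρ t̃₁)/√(1−ρ²) : b ∈ B } and B₀ = { (log b − log η₂)/σ₂ : b ∈ B }. Then for every t₁ > 0, the conditional density of T₁ given T₂ ∈ B satisfies [∫_B f(t₁,t₂) dt₂] / [∫₀^∞ ∫_B f(s,t₂) dt₂ ds] = (1/(t₁ σ₁)) · φ(t̃₁) · Φ(B_ρ(t₁)) / Φ(B₀). -/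
open MeasureTheory Real Set

/-- The standard normal density. -/
noncomputable def stdNormalPDF (x : ℝ) : ℝ := Real.exp (-x ^ 2 / 2) / Real.sqrt (2 * π)

/-!
In the coordinates `a = t̃₁`, `b = t̃₂` the Gaussian BLS law is the standard bivariate normal law
with correlation `ρ`, whose density factors as `φ(a)` times the `N(ρa, 1 - ρ²)` density at `b`;
the Jacobians `1/(tᵢσᵢ)` of the log transforms supply the remaining factors. For fixed `t₁`,
integrating the conditional factor over `B₀` is, after the affine change of variables
`x ↦ (x - ρa)/√(1 - ρ²)`, the mass `Φ(B_ρ(t₁))`. Integrating over `t₁` as well, the symmetry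
`φ(a) N(ρa, 1 - ρ²)(b) = φ(b) N(ρb, 1 - ρ²)(a)` of the joint density and Fubini turn the
denominator into `Φ(B₀)`.
-/

open ProbabilityTheory
open scoped NNReal

lemma stdNormalPDF_eq_gaussianPDFReal : stdNormalPDF = gaussianPDFReal 0 1 := by
  ext x
  simp [stdNormalPDF, gaussianPDFReal, div_eq_inv_mul]

lemma gaussianPDFReal_eq_inv_sqrt_mul_stdNormalPDF (μ : ℝ) {v : ℝ≥0} (hv : v ≠ 0) (x : ℝ) :
    gaussianPDFReal μ v x = (√v)⁻¹ * stdNormalPDF ((x - μ) / √v) := by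
  have hv' : (0 : ℝ) < v := by positivity
  rw [gaussianPDFReal, stdNormalPDF, div_pow, Real.sq_sqrt hv'.le,
    Real.sqrt_mul (by positivity : (0 : ℝ) ≤ 2 * π)]
  field_simp

lemma stdNormalPDF_mul_gaussianPDFReal {ρ : ℝ} {v : ℝ≥0} (hv : (v : ℝ) = 1 - ρ ^ 2)
    (hv0 : v ≠ 0) (a b : ℝ) :
    stdNormalPDF a * gaussianPDFReal (ρ * a) v b
      = exp (-((a ^ 2 - 2 * ρ * a * b + b ^ 2) / (1 - ρ ^ 2)) / 2)
          / (2 * π * √(1 - ρ ^ 2)) := by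
  have hρ : (0 : ℝ) < 1 - ρ ^ 2 := by rw [← hv]; positivity
  have hexp : exp (-a ^ 2 / 2) * exp (-(b - ρ * a) ^ 2 / (2 * (1 - ρ ^ 2)))
      = exp (-((a ^ 2 - 2 * ρ * a * b + b ^ 2) / (1 - ρ ^ 2)) / 2) := by
    rw [← exp_add]
    congr 1
    field_simp
    ring
  rw [stdNormalPDF, gaussianPDFReal, hv, ← hexp, Real.sqrt_mul (by positivity : (0 : ℝ) ≤ 2 * π)]
  field_simp
  rw [Real.sq_sqrt (by positivity)]

lemma stdNormalPDF_mul_gaussianPDFReal_comm {ρ : ℝ} {v : ℝ≥0} (hv : (v : ℝ) = 1 - ρ ^ 2)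
    (hv0 : v ≠ 0) (a b : ℝ) :
    stdNormalPDF a * gaussianPDFReal (ρ * a) v b
      = stdNormalPDF b * gaussianPDFReal (ρ * b) v a := by
  rw [stdNormalPDF_mul_gaussianPDFReal hv hv0, stdNormalPDF_mul_gaussianPDFReal hv hv0]
  ring_nf

lemma integral_stdNormalPDF_mul_gaussianPDFReal {ρ : ℝ} {v : ℝ≥0} (hv : (v : ℝ) = 1 - ρ ^ 2)
    (hv0 : v ≠ 0) (x : ℝ) :
    ∫ u, stdNormalPDF u * gaussianPDFReal (ρ * u) v x = stdNormalPDF x := by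
  simp_rw [stdNormalPDF_mul_gaussianPDFReal_comm hv hv0 _ x]
  rw [integral_const_mul, integral_gaussianPDFReal_eq_one _ hv0, mul_one]

lemma integrable_stdNormalPDF_mul_gaussianPDFReal (ρ : ℝ) (v : ℝ≥0) :
    Integrable (fun p : ℝ × ℝ => stdNormalPDF p.1 * gaussianPDFReal (ρ * p.1) v p.2)
      (volume.prod volume) := by
  rcases eq_or_ne v 0 with rfl | hv0
  · simp
  have hcont : Continuous fun p : ℝ × ℝ =>
      stdNormalPDF p.1 * gaussianPDFReal (ρ * p.1) v p.2 := by
    unfold stdNormalPDF gaussianPDFReal; fun_prop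
  rw [integrable_prod_iff hcont.aestronglyMeasurable]
  refine ⟨.of_forall fun u => (integrable_gaussianPDFReal (ρ * u) v).const_mul (stdNormalPDF u), ?_⟩
  have hnorm : ∀ u, ∫ x, ‖stdNormalPDF u * gaussianPDFReal (ρ * u) v x‖ = stdNormalPDF u := by
    intro u
    have hφ : 0 ≤ stdNormalPDF u := by unfold stdNormalPDF; positivity
    simp_rw [norm_mul, Real.norm_of_nonneg hφ, Real.norm_of_nonneg (gaussianPDFReal_nonneg _ _ _)]
    rw [integral_const_mul, integral_gaussianPDFReal_eq_one _ hv0, mul_one]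
  simp_rw [hnorm, stdNormalPDF_eq_gaussianPDFReal]
  exact integrable_gaussianPDFReal 0 1

lemma integral_stdNormalPDF_mul_setIntegral_gaussianPDFReal {ρ : ℝ} {v : ℝ≥0}
    (hv : (v : ℝ) = 1 - ρ ^ 2) (hv0 : v ≠ 0) (S : Set ℝ) :
    ∫ u, stdNormalPDF u * ∫ x in S, gaussianPDFReal (ρ * u) v x = ∫ x in S, stdNormalPDF x := by
  simp_rw [← integral_const_mul]
  rw [integral_integral_swap ((integrable_stdNormalPDF_mul_gaussianPDFReal ρ v).mono_measure
    (Measure.prod_mono le_rfl Measure.restrict_le_self))]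
  simp_rw [integral_stdNormalPDF_mul_gaussianPDFReal hv hv0]

lemma setIntegral_image_log_sub_div {S : Set ℝ} (hS : MeasurableSet S) (hS0 : S ⊆ Ioi 0)
    (m : ℝ) {k : ℝ} (hk : 0 < k) (g : ℝ → ℝ) :
    ∫ x in (fun t => (log t - m) / k) '' S, g x
      = ∫ t in S, 1 / (t * k) * g ((log t - m) / k) := by
  have hderiv : ∀ t ∈ S, HasDerivWithinAt (fun t => (log t - m) / k) (1 / (t * k)) S t := by
    intro t ht
    rw [show 1 / (t * k) = t⁻¹ / k by ring]
    exact (((hasDerivAt_log (hS0 ht).ne').sub_const m).div_const k).hasDerivWithinAt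
  have hinj : InjOn (fun t => (log t - m) / k) S := fun a ha b hb hab =>
    log_injOn_pos (hS0 ha) (hS0 hb) (by simpa [hk.ne'] using hab)
  rw [integral_image_eq_integral_abs_deriv_smul hS hderiv hinj g]
  refine setIntegral_congr_fun hS fun t ht => ?_
  have ht0 : 0 < t := hS0 ht
  rw [smul_eq_mul, abs_of_pos (by positivity)]

lemma image_logStd_Ioi (η : ℝ) {σ : ℝ} (hσ : σ ≠ 0) : logStd η σ '' Ioi 0 = univ := by
  refine eq_univ_of_forall fun x => ⟨exp (log η + σ * x), exp_pos _, ?_⟩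
  rw [logStd, log_exp]
  field_simp
  ring

lemma setIntegral_image_logStd_sub_div_sqrt {η σ μ : ℝ} {v : ℝ≥0} (hσ : 0 < σ) (hv0 : v ≠ 0)
    {S : Set ℝ} (hS : MeasurableSet S) (hS0 : S ⊆ Ioi 0) :
    ∫ x in (fun t => (logStd η σ t - μ) / √v) '' S, stdNormalPDF x
      = ∫ x in logStd η σ '' S, gaussianPDFReal μ v x := by
  have hv : (0 : ℝ) < √v := by positivity
  have hcomp : (fun t => (logStd η σ t - μ) / √v)
      = fun t => (log t - (log η + σ * μ)) / (σ * √v) := by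
    ext t
    unfold logStd
    field_simp
    ring
  rw [hcomp, setIntegral_image_log_sub_div hS hS0 _ (by positivity)]
  refine ((setIntegral_image_log_sub_div hS hS0 (log η) hσ _).trans
    (setIntegral_congr_fun hS fun t _ => ?_)).symm
  rw [gaussianPDFReal_eq_inv_sqrt_mul_stdNormalPDF _ hv0,
    show ((log t - log η) / σ - μ) / √v = _ from congrFun hcomp t]
  field_simp

lemma integral_exp_neg_div_two_Ioi : ∫ u in Ioi (0 : ℝ), exp (-u / 2) = 2 := by
  have h := integral_exp_mul_Ioi (a := -1 / 2) (by norm_num) 0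
  simp only [mul_zero, exp_zero] at h
  convert h using 1
  · congr 1; ext u; ring_nf
  · norm_num

lemma blsDensity_gaussian_eq {η₁ η₂ σ₁ σ₂ ρ : ℝ} {v : ℝ≥0} (hv : (v : ℝ) = 1 - ρ ^ 2)
    (hv0 : v ≠ 0) {t₁ t₂ : ℝ} (h₁ : 0 < t₁) (h₂ : 0 < t₂) :
    blsDensity (fun x => exp (-x / 2)) η₁ η₂ σ₁ σ₂ ρ (t₁, t₂)
      = 1 / (t₁ * σ₁) * stdNormalPDF (logStd η₁ σ₁ t₁)
          * (1 / (t₂ * σ₂) * gaussianPDFReal (ρ * logStd η₁ σ₁ t₁) v (logStd η₂ σ₂ t₂)) := by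
  rw [blsDensity, if_pos ⟨h₁, h₂⟩, integral_exp_neg_div_two_Ioi]
  conv_rhs => rw [mul_mul_mul_comm, stdNormalPDF_mul_gaussianPDFReal hv hv0]
  ring

lemma setIntegral_blsDensity_gaussian {η₁ η₂ σ₁ σ₂ ρ : ℝ} {v : ℝ≥0} (hσ₂ : 0 < σ₂)
    (hv : (v : ℝ) = 1 - ρ ^ 2) (hv0 : v ≠ 0) {B : Set ℝ} (hB : MeasurableSet B)
    (hB0 : B ⊆ Ioi 0) {t₁ : ℝ} (ht₁ : 0 < t₁) :
    ∫ t₂ in B, blsDensity (fun x => exp (-x / 2)) η₁ η₂ σ₁ σ₂ ρ (t₁, t₂)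
      = 1 / (t₁ * σ₁) * stdNormalPDF (logStd η₁ σ₁ t₁)
          * ∫ x in logStd η₂ σ₂ '' B, gaussianPDFReal (ρ * logStd η₁ σ₁ t₁) v x := by
  rw [setIntegral_congr_fun hB fun t₂ ht₂ => blsDensity_gaussian_eq hv hv0 ht₁ (hB0 ht₂),
    integral_const_mul]
  congr 1
  exact (setIntegral_image_log_sub_div hB hB0 _ hσ₂ _).symm

lemma integral_Ioi_setIntegral_blsDensity_gaussian {η₁ η₂ σ₁ σ₂ ρ : ℝ} {v : ℝ≥0}
    (hσ₁ : 0 < σ₁) (hσ₂ : 0 < σ₂) (hv : (v : ℝ) = 1 - ρ ^ 2) (hv0 : v ≠ 0) {B : Set ℝ}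
    (hB : MeasurableSet B) (hB0 : B ⊆ Ioi 0) :
    ∫ s in Ioi 0, ∫ t₂ in B, blsDensity (fun x => exp (-x / 2)) η₁ η₂ σ₁ σ₂ ρ (s, t₂)
      = ∫ x in logStd η₂ σ₂ '' B, stdNormalPDF x := by
  calc ∫ s in Ioi 0, ∫ t₂ in B, blsDensity (fun x => exp (-x / 2)) η₁ η₂ σ₁ σ₂ ρ (s, t₂)
      = ∫ s in Ioi 0, 1 / (s * σ₁) * (stdNormalPDF (logStd η₁ σ₁ s)
          * ∫ x in logStd η₂ σ₂ '' B, gaussianPDFReal (ρ * logStd η₁ σ₁ s) v x) :=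
        setIntegral_congr_fun measurableSet_Ioi fun s hs => by
          rw [setIntegral_blsDensity_gaussian hσ₂ hv hv0 hB hB0 hs, mul_assoc]
    _ = ∫ u in logStd η₁ σ₁ '' Ioi 0,
          stdNormalPDF u * ∫ x in logStd η₂ σ₂ '' B, gaussianPDFReal (ρ * u) v x :=
        (setIntegral_image_log_sub_div measurableSet_Ioi subset_rfl _ hσ₁
          fun u => stdNormalPDF u * ∫ x in logStd η₂ σ₂ '' B, gaussianPDFReal (ρ * u) v x).symm
    _ = ∫ u, stdNormalPDF u * ∫ x in logStd η₂ σ₂ '' B, gaussianPDFReal (ρ * u) v x := by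
        rw [image_logStd_Ioi _ hσ₁.ne', Measure.restrict_univ]
    _ = ∫ x in logStd η₂ σ₂ '' B, stdNormalPDF x :=
        integral_stdNormalPDF_mul_setIntegral_gaussianPDFReal hv hv0 _

theorem bls_gaussian_conditional_density_given_set_general
    (η₁ η₂ σ₁ σ₂ ρ : ℝ) (hσ₁ : 0 < σ₁) (hσ₂ : 0 < σ₂)
    (hρ : ρ ∈ Ioo (-1 : ℝ) 1)
    (B : Set ℝ) (hB : MeasurableSet B) (hBsub : B ⊆ Ioi 0) :
    ∀ t₁ : ℝ, 0 < t₁ →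
      (∫ t₂ in B, blsDensity (fun x => Real.exp (-x / 2)) η₁ η₂ σ₁ σ₂ ρ (t₁, t₂))
          / (∫ s in Ioi (0 : ℝ), ∫ t₂ in B,
              blsDensity (fun x => Real.exp (-x / 2)) η₁ η₂ σ₁ σ₂ ρ (s, t₂))
        = (1 / (t₁ * σ₁)) * stdNormalPDF (logStd η₁ σ₁ t₁)
            * (∫ x in (fun b => ((Real.log b - Real.log η₂) / σ₂ - ρ * logStd η₁ σ₁ t₁)
                  / Real.sqrt (1 - ρ ^ 2)) '' B, stdNormalPDF x)
            / (∫ x in (fun b => (Real.log b - Real.log η₂) / σ₂) '' B, stdNormalPDF x) := by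
  intro t₁ ht₁
  have hρ2 : (0 : ℝ) < 1 - ρ ^ 2 := by nlinarith [hρ.1, hρ.2]
  set v : ℝ≥0 := ⟨1 - ρ ^ 2, hρ2.le⟩
  have hv : (v : ℝ) = 1 - ρ ^ 2 := rfl
  have hv0 : v ≠ 0 := NNReal.coe_ne_zero.mp hρ2.ne'
  rw [setIntegral_blsDensity_gaussian hσ₂ hv hv0 hB hBsub ht₁,
    integral_Ioi_setIntegral_blsDensity_gaussian hσ₁ hσ₂ hv hv0 hB hBsub,
    ← setIntegral_image_logStd_sub_div_sqrt hσ₂ hv0 hB hBsub]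
  rfl

/-- Conditional density of `T₁` given `T₂ ∈ B` for the bivariate log-normal
distribution (Gaussian generator `g(x) = e^{−x/2}`). -/
theorem bls_gaussian_conditional_density_given_set
    (η₁ η₂ σ₁ σ₂ ρ : ℝ) (hη₁ : 0 < η₁) (hη₂ : 0 < η₂) (hσ₁ : 0 < σ₁) (hσ₂ : 0 < σ₂)
    (hρ : ρ ∈ Ioo (-1 : ℝ) 1)
    (B : Set ℝ) (hB : MeasurableSet B) (hBsub : B ⊆ Ioi 0)
    (hpos : 0 < ∫ s in Ioi (0 : ℝ), ∫ t₂ in B,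
        blsDensity (fun x => Real.exp (-x / 2)) η₁ η₂ σ₁ σ₂ ρ (s, t₂)) :
    ∀ t₁ : ℝ, 0 < t₁ →
      (∫ t₂ in B, blsDensity (fun x => Real.exp (-x / 2)) η₁ η₂ σ₁ σ₂ ρ (t₁, t₂))
          / (∫ s in Ioi (0 : ℝ), ∫ t₂ in B,
              blsDensity (fun x => Real.exp (-x / 2)) η₁ η₂ σ₁ σ₂ ρ (s, t₂))
        = (1 / (t₁ * σ₁)) * stdNormalPDF (logStd η₁ σ₁ t₁)
            * (∫ x in (fun b => ((Real.log b - Real.log η₂) / σ₂ - ρ * logStd η₁ σ₁ t₁)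
                  / Real.sqrt (1 - ρ ^ 2)) '' B, stdNormalPDF x)
            / (∫ x in (fun b => (Real.log b - Real.log η₂) / σ₂) '' B, stdNormalPDF x) :=
  bls_gaussian_conditional_density_given_set_general η₁ η₂ σ₁ σ₂ ρ hσ₁ hσ₂ hρ B hB hBsub
end

section
/- For ν > 0 let f_ν(x) = Γ((ν+1)/2)/(√(νπ) Γ(ν/2)) · (1 + x²/ν)^{−(ν+1)/2} denote the standard Student-t density with ν degrees of freedom, and for a Borel set C ⊆ ℝ write F_ν(C) = ∫_C f_ν(x) dx. Let f be the BLS(η₁,η₂,σ₁,σ₂,ρ; g_c) density with Student-t generator g_c(x) = (1 + x/ν)^{−(ν+2)/2}. Let B ⊆ (0,∞) be a Borel set with ∫₀^∞ ∫_B f(s,t₂) dt₂ ds > 0, and for t₁ > 0 define B_ρ(t₁) = { ((log b − log η₂)/σ₂ − ρ t̃₁)/√(1−ρ²) : b ∈ B } and B₀ = { (log b − log η₂)/σ₂ : b ∈ B }. Then for every t₁ > 0, [∫_B f(t₁,t₂) dt₂] / [∫₀^∞ ∫_B f(s,t₂) dt₂ ds] = (1/(t₁ σ₁)) · f_ν(t̃₁)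 · F_{ν+1}( √((ν+1)/(ν + t̃₁²)) · B_ρ(t₁) ) / F_ν(B₀), where √((ν+1)/(ν + t̃₁²)) · B_ρ(t₁) denotes the set {√((ν+1)/(ν + t̃₁²)) w : w ∈ B_ρ(t₁)}. -/
/-!
Completing the square, the generator of the density at `(t₁, t₂)` is evaluated at `τ² + w²`,
where `τ = t̃₁` and `w = (t̃₂ - ρ τ) / √(1 - ρ²)`, and the Student generator splits as
`(1 + (τ² + w²)/ν)^(-(ν+2)/2)
  = (1 + τ²/ν)^(-(ν+1)/2) · (1 + τ²/ν)^(-1/2) · (1 + (c w)²/(ν+1))^(-(ν+2)/2)`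
with `c = √((ν+1)/(ν+τ²))`. Since `Z = 2π`, the density is therefore, up to the Jacobians of the
log-affine maps involved, the `t_ν` density of `t̃₁` times the `t_{ν+1}` density of `c w`, an
affine function of `log t₂`. Integrating over `t₂ ∈ B`
is the change of variables `t₂ ↦ c w`; integrating over `t₁` first (Fubini) leaves the `t_ν`
density of `t̃₂`, because the `t_{ν+1}` density has total mass one, which comes down to the Beta
integral `∫ (1 + y²)^(-a) dy = Γ(1/2) Γ(a - 1/2) / Γ(a)`.
-/

open MeasureTheory Real Set

/-- The standard Student-`t` density with `ν` degrees of freedom. -/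
noncomputable def studentTPDF (ν x : ℝ) : ℝ :=
  Real.Gamma ((ν + 1) / 2) / (Real.sqrt (ν * π) * Real.Gamma (ν / 2))
    * (1 + x ^ 2 / ν) ^ (-((ν + 1) / 2))

/-- The Student-`t` density generator with `ν` degrees of freedom. -/
noncomputable def studentTGen (ν x : ℝ) : ℝ := (1 + x / ν) ^ (-((ν + 2) / 2))

theorem integral_Ioo_rpow_mul_one_sub_rpow {u v : ℝ} (hu : 0 < u) (hv : 0 < v) :
    ∫ t in Ioo (0 : ℝ) 1, t ^ (u - 1) * (1 - t) ^ (v - 1)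
      = Gamma u * Gamma v / Gamma (u + v) := by
  have hbeta : Complex.betaIntegral u v
      = ↑(∫ t in Ioo (0 : ℝ) 1, t ^ (u - 1) * (1 - t) ^ (v - 1)) := by
    rw [Complex.betaIntegral, intervalIntegral.integral_of_le zero_le_one,
      integral_Ioc_eq_integral_Ioo, ← integral_complex_ofReal]
    refine setIntegral_congr_fun measurableSet_Ioo fun t ht => ?_
    rw [Complex.ofReal_mul, Complex.ofReal_cpow ht.1.le,
      Complex.ofReal_cpow (sub_nonneg.2 ht.2.le)]
    push_cast
    rfl
  have h := Complex.Gamma_mul_Gamma_eq_betaIntegral (s := u) (t := v) (by simpa) (by simpa)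
  rw [hbeta, ← Complex.ofReal_add, Complex.Gamma_ofReal, Complex.Gamma_ofReal,
    Complex.Gamma_ofReal] at h
  rw [eq_div_iff (Gamma_pos_of_pos (add_pos hu hv)).ne', mul_comm]
  exact_mod_cast h.symm

theorem integral_Ioi_rpow_mul_one_add_rpow_neg {u v : ℝ} (hu : 0 < u) (hv : 0 < v) :
    ∫ x in Ioi (0 : ℝ), x ^ (u - 1) * (1 + x) ^ (-(u + v))
      = Gamma u * Gamma v / Gamma (u + v) := by
  have himage : (fun t : ℝ => t / (1 - t)) '' Ioo 0 1 = Ioi 0 := by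
    refine Subset.antisymm (image_subset_iff.2 fun t ht => div_pos ht.1 (sub_pos.2 ht.2))
      fun x (hx : 0 < x) =>
        ⟨x / (1 + x), ⟨by positivity, (div_lt_one (by positivity)).2 (by linarith)⟩, ?_⟩
    field_simp
    ring
  have hderiv : ∀ t ∈ Ioo (0 : ℝ) 1,
      HasDerivWithinAt (fun t : ℝ => t / (1 - t)) (1 / (1 - t) ^ 2) (Ioo 0 1) t := by
    intro t ht
    have h := (hasDerivAt_id' t).div ((hasDerivAt_id' t).const_sub 1) (sub_pos.2 ht.2).ne'
    exact (h.congr_deriv (by ring)).hasDerivWithinAt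
  have hinj : InjOn (fun t : ℝ => t / (1 - t)) (Ioo 0 1) := by
    intro x hx y hy hxy
    have := (sub_pos.2 hx.2).ne'
    have := (sub_pos.2 hy.2).ne'
    field_simp at hxy
    linarith
  rw [← himage, integral_image_eq_integral_abs_deriv_smul measurableSet_Ioo hderiv hinj,
    ← integral_Ioo_rpow_mul_one_sub_rpow hu hv]
  refine setIntegral_congr_fun measurableSet_Ioo fun t ht => ?_
  have hq : 0 < 1 - t := sub_pos.2 ht.2
  have h1 : 1 + t / (1 - t) = (1 - t)⁻¹ := by field_simp; ring
  rw [smul_eq_mul, abs_of_pos (by positivity), h1, div_rpow ht.1.le hq.le, inv_rpow hq.le,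
    rpow_neg hq.le, inv_inv, show u + v = (u - 1) + (v - 1) + 2 by ring,
    rpow_add hq, rpow_add hq, rpow_two]
  have : 0 < (1 - t) ^ (u - 1) := rpow_pos_of_pos hq _
  field_simp

theorem integral_one_add_sq_rpow_neg {a : ℝ} (ha : 1 / 2 < a) :
    ∫ y : ℝ, (1 + y ^ 2) ^ (-a) = Gamma (1 / 2) * Gamma (a - 1 / 2) / Gamma a := by
  set g : ℝ → ℝ := fun x => 1 / 2 * (x ^ ((1 / 2 : ℝ) - 1) * (1 + x) ^ (-(1 / 2 + (a - 1 / 2))))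
  have hsubst : ∫ y in Ioi (0 : ℝ), (1 + y ^ 2) ^ (-a)
      = ∫ y in Ioi (0 : ℝ), ((2 : ℝ) * y ^ ((2 : ℝ) - 1)) • g (y ^ (2 : ℝ)) := by
    refine setIntegral_congr_fun measurableSet_Ioi fun y (hy : 0 < y) => ?_
    simp only [g, smul_eq_mul]
    rw [← rpow_mul hy.le, rpow_two, show (2 : ℝ) - 1 = 1 by norm_num,
      show 2 * (1 / 2 - 1 : ℝ) = -1 by norm_num, rpow_one, rpow_neg_one,
      show 1 / 2 + (a - 1 / 2) = a by ring]
    field_simp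
  calc ∫ y : ℝ, (1 + y ^ 2) ^ (-a)
      = 2 * ∫ y in Ioi (0 : ℝ), (1 + y ^ 2) ^ (-a) := by
        rw [← integral_comp_abs]
        simp only [sq_abs]
    _ = 2 * ∫ x in Ioi (0 : ℝ), g x := by rw [hsubst, integral_comp_rpow_Ioi_of_pos two_pos]
    _ = Gamma (1 / 2) * Gamma (a - 1 / 2) / Gamma a := by
        rw [integral_const_mul,
          integral_Ioi_rpow_mul_one_add_rpow_neg (by norm_num) (by linarith),
          show 1 / 2 + (a - 1 / 2) = a by ring]
        ring

lemma studentTPDF_eq_mul_one_add_div_sqrt_sq {ν : ℝ} (hν : 0 < ν) (x : ℝ) :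
    studentTPDF ν x = Gamma ((ν + 1) / 2) / (√(ν * π) * Gamma (ν / 2))
      * (1 + (x / √ν) ^ 2) ^ (-((ν + 1) / 2)) := by
  rw [studentTPDF, div_pow, sq_sqrt hν.le]

theorem integrable_studentTPDF {ν : ℝ} (hν : 0 < ν) : Integrable (studentTPDF ν) := by
  have hr : (Module.finrank ℝ ℝ : ℝ) < ν + 1 := by simpa using hν
  have h := ((integrable_rpow_neg_one_add_norm_sq hr).comp_div (sqrt_pos.2 hν).ne').const_mul
    (Gamma ((ν + 1) / 2) / (√(ν * π) * Gamma (ν / 2)))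
  refine h.congr (Filter.Eventually.of_forall fun x => ?_)
  simp only [studentTPDF_eq_mul_one_add_div_sqrt_sq hν, norm_eq_abs, sq_abs, neg_div]

theorem integral_studentTPDF {ν : ℝ} (hν : 0 < ν) : ∫ x, studentTPDF ν x = 1 := by
  simp only [studentTPDF_eq_mul_one_add_div_sqrt_sq hν]
  rw [integral_const_mul, Measure.integral_comp_div (fun y => (1 + y ^ 2) ^ (-((ν + 1) / 2))),
    integral_one_add_sq_rpow_neg (by linarith), show (ν + 1) / 2 - 1 / 2 = ν / 2 by ring,
    Gamma_one_half_eq, abs_of_pos (sqrt_pos.2 hν), smul_eq_mul, sqrt_mul hν.le]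
  have := Gamma_pos_of_pos (by linarith : 0 < (ν + 1) / 2)
  have := Gamma_pos_of_pos (by linarith : 0 < ν / 2)
  have := sqrt_pos.2 hν
  have := sqrt_pos.2 pi_pos
  field_simp

lemma studentTPDF_nonneg {ν : ℝ} (hν : 0 < ν) (x : ℝ) : 0 ≤ studentTPDF ν x := by
  have := Gamma_pos_of_pos (by linarith : 0 < (ν + 1) / 2)
  have := Gamma_pos_of_pos (by linarith : 0 < ν / 2)
  unfold studentTPDF
  positivity

theorem integral_Ioi_studentTGen {ν : ℝ} (hν : 0 < ν) :
    ∫ u in Ioi (0 : ℝ), studentTGen ν u = 2 := by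
  have himage : (fun u : ℝ => 1 + u / ν) '' Ioi 0 = Ioi 1 := by
    refine Subset.antisymm (image_subset_iff.2 fun u (hu : 0 < u) => ?_) fun x (hx : 1 < x) =>
      ⟨ν * (x - 1), mul_pos hν (sub_pos.2 hx), by field_simp; ring⟩
    simpa using div_pos hu hν
  have hsubst := integral_image_eq_integral_abs_deriv_smul (s := Ioi 0)
    (f := fun u : ℝ => 1 + u / ν) measurableSet_Ioi
    (fun u _ => ((hasDerivAt_id' u).div_const ν |>.const_add 1).hasDerivWithinAt)
    (fun x _ y _ hxy => by simpa [hν.ne'] using hxy) (fun x => x ^ (-((ν + 2) / 2)))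
  rw [himage, integral_Ioi_rpow_of_lt (by linarith) zero_lt_one, one_rpow] at hsubst
  simp only [abs_of_pos (one_div_pos.2 hν), smul_eq_mul, integral_const_mul] at hsubst
  have h : -1 / (-((ν + 2) / 2) + 1) = 2 / ν := by
    rw [show -((ν + 2) / 2) + 1 = -(ν / 2) by ring]
    field_simp
  rw [h, eq_comm, one_div_mul_eq_div, div_left_inj' hν.ne'] at hsubst
  exact hsubst

section LogAffine

variable {k : ℝ} (d : ℝ) {A : Set ℝ}

lemma hasDerivWithinAt_mul_log_add {b : ℝ} (hb : 0 < b) :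
    HasDerivWithinAt (fun b => k * log b + d) (k / b) A b := by
  simpa [div_eq_mul_inv] using
    (((hasDerivAt_log hb.ne').const_mul k).add_const d).hasDerivWithinAt

lemma injOn_mul_log_add (hk : k ≠ 0) (hA0 : A ⊆ Ioi 0) : InjOn (fun b => k * log b + d) A :=
  fun _ hx _ hy hxy =>
    log_injOn_pos (hA0 hx) (hA0 hy) (mul_left_cancel₀ hk (add_right_cancel hxy))

theorem integral_image_mul_log_add (hk : 0 < k) (hA : MeasurableSet A) (hA0 : A ⊆ Ioi 0)
    (G : ℝ → ℝ) :
    ∫ x in (fun b => k * log b + d) '' A, G x = ∫ b in A, k / b * G (k * log b + d) := by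
  rw [integral_image_eq_integral_abs_deriv_smul hA
    (fun b hb => hasDerivWithinAt_mul_log_add d (hA0 hb)) (injOn_mul_log_add d hk.ne' hA0)]
  refine setIntegral_congr_fun hA fun b hb => ?_
  rw [abs_of_pos (div_pos hk (hA0 hb)), smul_eq_mul]

theorem integrableOn_image_mul_log_add_iff (hk : 0 < k) (hA : MeasurableSet A)
    (hA0 : A ⊆ Ioi 0) (G : ℝ → ℝ) :
    IntegrableOn G ((fun b => k * log b + d) '' A)
      ↔ IntegrableOn (fun b => k / b * G (k * log b + d)) A := by
  rw [integrableOn_image_iff_integrableOn_abs_deriv_smul hA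
    (fun b hb => hasDerivWithinAt_mul_log_add d (hA0 hb)) (injOn_mul_log_add d hk.ne' hA0)]
  refine integrableOn_congr_fun (fun b hb => ?_) hA
  rw [abs_of_pos (div_pos hk (hA0 hb)), smul_eq_mul]

lemma image_mul_log_add_Ioi (hk : k ≠ 0) : (fun b => k * log b + d) '' Ioi 0 = univ :=
  eq_univ_of_forall fun x => ⟨exp ((x - d) / k), exp_pos _, by
    simp only [log_exp]
    field_simp
    ring⟩

end LogAffine

lemma logStd_eq_mul_log_add (η σ : ℝ) : logStd η σ = fun b => σ⁻¹ * log b + -log η / σ := by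
  ext b
  rw [logStd]
  ring

theorem integral_image_logStd {η σ : ℝ} (hσ : 0 < σ) {A : Set ℝ} (hA : MeasurableSet A)
    (hA0 : A ⊆ Ioi 0) (G : ℝ → ℝ) :
    ∫ x in logStd η σ '' A, G x = ∫ b in A, 1 / (b * σ) * G (logStd η σ b) := by
  rw [logStd_eq_mul_log_add, integral_image_mul_log_add _ (inv_pos.2 hσ) hA hA0]
  refine setIntegral_congr_fun hA fun b _ => ?_
  dsimp only
  ring

theorem integrableOn_image_logStd_iff {η σ : ℝ} (hσ : 0 < σ) {A : Set ℝ}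
    (hA : MeasurableSet A) (hA0 : A ⊆ Ioi 0) (G : ℝ → ℝ) :
    IntegrableOn G (logStd η σ '' A)
      ↔ IntegrableOn (fun b => 1 / (b * σ) * G (logStd η σ b)) A := by
  rw [logStd_eq_mul_log_add, integrableOn_image_mul_log_add_iff _ (inv_pos.2 hσ) hA hA0]
  refine integrableOn_congr_fun (fun b _ => ?_) hA
  dsimp only
  ring

noncomputable def condTSlope (ν σ₂ ρ τ : ℝ) : ℝ :=
  √((ν + 1) / (ν + τ ^ 2)) / (σ₂ * √(1 - ρ ^ 2))

/-- `√((ν + 1) / (ν + t̃₁²)) · B_ρ(t₁)` is the image of `B` under `condTScore ν η₂ σ₂ ρ t̃₁`. -/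
noncomputable def condTScore (ν η₂ σ₂ ρ τ b : ℝ) : ℝ :=
  √((ν + 1) / (ν + τ ^ 2)) * ((logStd η₂ σ₂ b - ρ * τ) / √(1 - ρ ^ 2))

lemma condTScore_eq_mul_log_add (ν η₂ σ₂ ρ τ : ℝ) :
    condTScore ν η₂ σ₂ ρ τ
      = fun b => condTSlope ν σ₂ ρ τ * log b + condTScore ν η₂ σ₂ ρ τ 1 := by
  ext b
  simp only [condTScore, condTSlope, logStd, log_one]
  ring

lemma condTSlope_pos {ν σ₂ ρ : ℝ} (hν : 0 < ν) (hσ₂ : 0 < σ₂) (hρ : ρ ∈ Ioo (-1 : ℝ) 1)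
    (τ : ℝ) :
    0 < condTSlope ν σ₂ ρ τ := by
  have : 0 < 1 - ρ ^ 2 := by nlinarith [hρ.1, hρ.2]
  unfold condTSlope
  positivity

lemma studentTGen_add_sq {ν : ℝ} (hν : 0 < ν) (τ w : ℝ) :
    studentTGen ν (τ ^ 2 + w ^ 2) = (1 + τ ^ 2 / ν) ^ (-((ν + 1) / 2)) * (√ν / √(ν + τ ^ 2))
      * (1 + (√((ν + 1) / (ν + τ ^ 2)) * w) ^ 2 / (ν + 1)) ^ (-((ν + 2) / 2)) := by
  have hc : √((ν + 1) / (ν + τ ^ 2)) ^ 2 = (ν + 1) / (ν + τ ^ 2) := sq_sqrt (by positivity)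
  have hsplit : 1 + (τ ^ 2 + w ^ 2) / ν
      = (1 + τ ^ 2 / ν) * (1 + (√((ν + 1) / (ν + τ ^ 2)) * w) ^ 2 / (ν + 1)) := by
    rw [mul_pow, hc]
    field_simp
    ring
  have hhalf : (1 + τ ^ 2 / ν) ^ (-(1 / 2) : ℝ) = √ν / √(ν + τ ^ 2) := by
    rw [show 1 + τ ^ 2 / ν = (ν + τ ^ 2) / ν by field_simp, rpow_neg (by positivity),
      ← sqrt_eq_rpow, ← sqrt_inv, inv_div, sqrt_div hν.le]
  rw [studentTGen, hsplit, mul_rpow (by positivity) (by positivity),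
    show -((ν + 2) / 2) = -((ν + 1) / 2) + -(1 / 2) by ring, rpow_add (by positivity), hhalf]

theorem blsDensity_studentTGen_eq_mul {ν η₁ η₂ σ₁ σ₂ ρ : ℝ} (hν : 0 < ν)
    (hσ₁ : 0 < σ₁) (hσ₂ : 0 < σ₂) (hρ : ρ ∈ Ioo (-1 : ℝ) 1) {t₁ b : ℝ} (ht₁ : 0 < t₁)
    (hb : 0 < b) :
    blsDensity (studentTGen ν) η₁ η₂ σ₁ σ₂ ρ (t₁, b)
      = 1 / (t₁ * σ₁) * studentTPDF ν (logStd η₁ σ₁ t₁)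
        * (condTSlope ν σ₂ ρ (logStd η₁ σ₁ t₁) / b
          * studentTPDF (ν + 1) (condTScore ν η₂ σ₂ ρ (logStd η₁ σ₁ t₁) b)) := by
  set τ := logStd η₁ σ₁ t₁
  have hρ2 : 0 < 1 - ρ ^ 2 := by nlinarith [hρ.1, hρ.2]
  have : 0 < √(1 - ρ ^ 2) := sqrt_pos.2 hρ2
  have hcomplete_square :
      (τ ^ 2 - 2 * ρ * τ * logStd η₂ σ₂ b + logStd η₂ σ₂ b ^ 2) / (1 - ρ ^ 2)
        = τ ^ 2 + ((logStd η₂ σ₂ b - ρ * τ) / √(1 - ρ ^ 2)) ^ 2 := by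
    rw [div_pow, sq_sqrt hρ2.le]
    field_simp
    ring
  rw [blsDensity, if_pos ⟨ht₁, hb⟩, integral_Ioi_studentTGen hν]
  dsimp only
  rw [hcomplete_square, studentTGen_add_sq hν, studentTPDF, studentTPDF, condTSlope,
    condTScore,
    show ν + 1 + 1 = ν + 2 by ring, show (ν + 2) / 2 = ν / 2 + 1 by ring,
    Gamma_add_one (by positivity),
    sqrt_mul hν.le, sqrt_mul (by positivity : (0 : ℝ) ≤ ν + 1),
    sqrt_div (by positivity : (0 : ℝ) ≤ ν + 1)]
  have := Gamma_pos_of_pos (by positivity : 0 < ν / 2)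
  have := Gamma_pos_of_pos (by positivity : 0 < (ν + 1) / 2)
  have := sqrt_pos.2 hν
  have : 0 < √(ν + 1) := sqrt_pos.2 (by positivity)
  have : 0 < √(ν + τ ^ 2) := sqrt_pos.2 (by positivity)
  have := sqrt_pos.2 pi_pos
  generalize (1 + τ ^ 2 / ν) ^ (-((ν + 1) / 2)) = P₁
  generalize (1 + (√(ν + 1) / √(ν + τ ^ 2) * ((logStd η₂ σ₂ b - ρ * τ) / √(1 - ρ ^ 2))) ^ 2
    / (ν + 1)) ^ (-(ν / 2 + 1)) = P₂
  field_simp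
  rw [sq_sqrt hν.le, sq_sqrt pi_pos.le]

lemma blsDensity_swap (g : ℝ → ℝ) (η₁ η₂ σ₁ σ₂ ρ a b : ℝ) :
    blsDensity g η₁ η₂ σ₁ σ₂ ρ (a, b) = blsDensity g η₂ η₁ σ₂ σ₁ ρ (b, a) := by
  simp only [blsDensity, and_comm (a := 0 < a)]
  congr 2
  · ring_nf
  · ring

lemma measurable_blsDensity {g : ℝ → ℝ} (hg : Measurable g) (η₁ η₂ σ₁ σ₂ ρ : ℝ) :
    Measurable (blsDensity g η₁ η₂ σ₁ σ₂ ρ) := by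
  unfold blsDensity logStd
  refine Measurable.ite ?_ (by fun_prop) measurable_const
  exact (measurableSet_lt measurable_const measurable_fst).inter
    (measurableSet_lt measurable_const measurable_snd)

lemma measurable_studentTGen (ν : ℝ) : Measurable (studentTGen ν) := by
  unfold studentTGen
  fun_prop

lemma blsDensity_studentTGen_nonneg {ν η₁ η₂ σ₁ σ₂ ρ : ℝ} (hν : 0 < ν)
    (hσ₁ : 0 < σ₁) (hσ₂ : 0 < σ₂) (hρ : ρ ∈ Ioo (-1 : ℝ) 1) (p : ℝ × ℝ) :
    0 ≤ blsDensity (studentTGen ν) η₁ η₂ σ₁ σ₂ ρ p := by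
  obtain ⟨t₁, t₂⟩ := p
  by_cases h : 0 < t₁ ∧ 0 < t₂
  · obtain ⟨ht₁, ht₂⟩ := h
    rw [blsDensity_studentTGen_eq_mul hν hσ₁ hσ₂ hρ ht₁ ht₂]
    have := studentTPDF_nonneg hν (logStd η₁ σ₁ t₁)
    have := studentTPDF_nonneg (ν := ν + 1) (by positivity)
      (condTScore ν η₂ σ₂ ρ (logStd η₁ σ₁ t₁) t₂)
    have := condTSlope_pos hν hσ₂ hρ (logStd η₁ σ₁ t₁)
    positivity
  · simp [blsDensity, h]

section StudentBLS

variable {ν η₁ η₂ σ₁ σ₂ ρ : ℝ} {B : Set ℝ}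

theorem setIntegral_blsDensity_studentTGen (hν : 0 < ν) (hσ₁ : 0 < σ₁) (hσ₂ : 0 < σ₂)
    (hρ : ρ ∈ Ioo (-1 : ℝ) 1) (hB : MeasurableSet B) (hB0 : B ⊆ Ioi 0) {t₁ : ℝ} (ht₁ : 0 < t₁) :
    ∫ t₂ in B, blsDensity (studentTGen ν) η₁ η₂ σ₁ σ₂ ρ (t₁, t₂)
      = 1 / (t₁ * σ₁) * studentTPDF ν (logStd η₁ σ₁ t₁)
        * ∫ x in condTScore ν η₂ σ₂ ρ (logStd η₁ σ₁ t₁) '' B, studentTPDF (ν + 1) x := by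
  rw [setIntegral_congr_fun hB fun b hb =>
      blsDensity_studentTGen_eq_mul hν hσ₁ hσ₂ hρ ht₁ (hB0 hb),
    integral_const_mul, condTScore_eq_mul_log_add,
    integral_image_mul_log_add _ (condTSlope_pos hν hσ₂ hρ _) hB hB0]

theorem integrableOn_blsDensity_studentTGen (hν : 0 < ν) (hσ₁ : 0 < σ₁) (hσ₂ : 0 < σ₂)
    (hρ : ρ ∈ Ioo (-1 : ℝ) 1) (hB : MeasurableSet B) (hB0 : B ⊆ Ioi 0) {t₁ : ℝ} (ht₁ : 0 < t₁) :
    IntegrableOn (fun t₂ => blsDensity (studentTGen ν) η₁ η₂ σ₁ σ₂ ρ (t₁, t₂)) B := by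
  have h := (integrable_studentTPDF (ν := ν + 1) (by positivity)).integrableOn
    (s := condTScore ν η₂ σ₂ ρ (logStd η₁ σ₁ t₁) '' B)
  rw [condTScore_eq_mul_log_add,
    integrableOn_image_mul_log_add_iff _ (condTSlope_pos hν hσ₂ hρ _) hB hB0] at h
  refine (integrableOn_congr_fun (fun b hb => ?_) hB).2
    (h.const_mul (1 / (t₁ * σ₁) * studentTPDF ν (logStd η₁ σ₁ t₁)))
  rw [blsDensity_studentTGen_eq_mul hν hσ₁ hσ₂ hρ ht₁ (hB0 hb),
    congrFun (condTScore_eq_mul_log_add ..) b]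

theorem setIntegral_Ioi_blsDensity_studentTGen (hν : 0 < ν) (hσ₁ : 0 < σ₁) (hσ₂ : 0 < σ₂)
    (hρ : ρ ∈ Ioo (-1 : ℝ) 1) {t₂ : ℝ} (ht₂ : 0 < t₂) :
    ∫ s in Ioi 0, blsDensity (studentTGen ν) η₁ η₂ σ₁ σ₂ ρ (s, t₂)
      = 1 / (t₂ * σ₂) * studentTPDF ν (logStd η₂ σ₂ t₂) := by
  simp_rw [blsDensity_swap (studentTGen ν) η₁ η₂ σ₁ σ₂ ρ _ t₂]
  rw [setIntegral_blsDensity_studentTGen hν hσ₂ hσ₁ hρ measurableSet_Ioi subset_rfl ht₂,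
    condTScore_eq_mul_log_add, image_mul_log_add_Ioi _ (condTSlope_pos hν hσ₁ hρ _).ne',
    setIntegral_univ, integral_studentTPDF (by positivity), mul_one]

theorem integrableOn_Ioi_blsDensity_studentTGen (hν : 0 < ν) (hσ₁ : 0 < σ₁) (hσ₂ : 0 < σ₂)
    (hρ : ρ ∈ Ioo (-1 : ℝ) 1) {t₂ : ℝ} (ht₂ : 0 < t₂) :
    IntegrableOn (fun s => blsDensity (studentTGen ν) η₁ η₂ σ₁ σ₂ ρ (s, t₂)) (Ioi 0) := by
  simp_rw [blsDensity_swap (studentTGen ν) η₁ η₂ σ₁ σ₂ ρ _ t₂]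
  exact integrableOn_blsDensity_studentTGen hν hσ₂ hσ₁ hρ measurableSet_Ioi subset_rfl ht₂

theorem integrable_blsDensity_studentTGen_prod (hν : 0 < ν) (hσ₁ : 0 < σ₁) (hσ₂ : 0 < σ₂)
    (hρ : ρ ∈ Ioo (-1 : ℝ) 1) (hB : MeasurableSet B) (hB0 : B ⊆ Ioi 0) :
    Integrable (blsDensity (studentTGen ν) η₁ η₂ σ₁ σ₂ ρ)
      ((volume.restrict (Ioi 0)).prod (volume.restrict B)) := by
  have hmarg : IntegrableOn (fun t₂ => 1 / (t₂ * σ₂) * studentTPDF ν (logStd η₂ σ₂ t₂)) B :=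
    (integrableOn_image_logStd_iff hσ₂ hB hB0 _).1 (integrable_studentTPDF hν).integrableOn
  refine (integrable_prod_iff'
    ((measurable_blsDensity (measurable_studentTGen ν) η₁ η₂ σ₁ σ₂ ρ).aestronglyMeasurable)).2
    ⟨(ae_restrict_iff' hB).2 (ae_of_all _ fun t₂ ht₂ =>
      integrableOn_Ioi_blsDensity_studentTGen hν hσ₁ hσ₂ hρ (hB0 ht₂)), ?_⟩
  refine hmarg.congr_fun (fun t₂ ht₂ => ?_) hB
  dsimp only
  rw [← setIntegral_Ioi_blsDensity_studentTGen hν hσ₁ hσ₂ hρ (hB0 ht₂)]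
  exact setIntegral_congr_fun measurableSet_Ioi fun s _ =>
    (Real.norm_of_nonneg (blsDensity_studentTGen_nonneg hν hσ₁ hσ₂ hρ _)).symm

theorem setIntegral_setIntegral_blsDensity_studentTGen (hν : 0 < ν) (hσ₁ : 0 < σ₁) (hσ₂ : 0 < σ₂)
    (hρ : ρ ∈ Ioo (-1 : ℝ) 1) (hB : MeasurableSet B) (hB0 : B ⊆ Ioi 0) :
    ∫ s in Ioi 0, ∫ t₂ in B, blsDensity (studentTGen ν) η₁ η₂ σ₁ σ₂ ρ (s, t₂)
      = ∫ x in logStd η₂ σ₂ '' B, studentTPDF ν x := by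
  rw [integral_integral_swap (f := fun s t₂ => blsDensity (studentTGen ν) η₁ η₂ σ₁ σ₂ ρ (s, t₂))
      (integrable_blsDensity_studentTGen_prod hν hσ₁ hσ₂ hρ hB hB0),
    integral_image_logStd hσ₂ hB hB0]
  exact setIntegral_congr_fun hB fun t₂ ht₂ =>
    setIntegral_Ioi_blsDensity_studentTGen hν hσ₁ hσ₂ hρ (hB0 ht₂)

end StudentBLS

theorem bls_student_conditional_density_given_set_general
    (ν : ℝ) (hν : 0 < ν)
    (η₁ η₂ σ₁ σ₂ ρ : ℝ) (hσ₁ : 0 < σ₁) (hσ₂ : 0 < σ₂)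
    (hρ : ρ ∈ Ioo (-1 : ℝ) 1)
    (B : Set ℝ) (hB : MeasurableSet B) (hBsub : B ⊆ Ioi 0) :
    ∀ t₁ : ℝ, 0 < t₁ →
      (∫ t₂ in B, blsDensity (studentTGen ν) η₁ η₂ σ₁ σ₂ ρ (t₁, t₂))
          / (∫ s in Ioi (0 : ℝ), ∫ t₂ in B, blsDensity (studentTGen ν) η₁ η₂ σ₁ σ₂ ρ (s, t₂))
        = (1 / (t₁ * σ₁)) * studentTPDF ν (logStd η₁ σ₁ t₁)
            * (∫ x in (fun w => Real.sqrt ((ν + 1) / (ν + logStd η₁ σ₁ t₁ ^ 2)) * w) ''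
                  ((fun b => ((Real.log b - Real.log η₂) / σ₂ - ρ * logStd η₁ σ₁ t₁)
                    / Real.sqrt (1 - ρ ^ 2)) '' B),
                studentTPDF (ν + 1) x)
            / (∫ x in (fun b => (Real.log b - Real.log η₂) / σ₂) '' B, studentTPDF ν x) := by
  intro t₁ ht₁
  rw [image_image]
  change (∫ t₂ in B, _) / _ = _ * (∫ x in condTScore ν η₂ σ₂ ρ (logStd η₁ σ₁ t₁) '' B, _)
    / ∫ x in logStd η₂ σ₂ '' B, _
  rw [setIntegral_blsDensity_studentTGen hν hσ₁ hσ₂ hρ hB hBsub ht₁,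
    setIntegral_setIntegral_blsDensity_studentTGen hν hσ₁ hσ₂ hρ hB hBsub, mul_div_assoc]

/-- Conditional density of `T₁` given `T₂ ∈ B` for the bivariate
log-Student-`t` distribution. -/
theorem bls_student_conditional_density_given_set
    (ν : ℝ) (hν : 0 < ν)
    (η₁ η₂ σ₁ σ₂ ρ : ℝ) (hη₁ : 0 < η₁) (hη₂ : 0 < η₂) (hσ₁ : 0 < σ₁) (hσ₂ : 0 < σ₂)
    (hρ : ρ ∈ Ioo (-1 : ℝ) 1)
    (B : Set ℝ) (hB : MeasurableSet B) (hBsub : B ⊆ Ioi 0)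
    (hpos : 0 < ∫ s in Ioi (0 : ℝ), ∫ t₂ in B,
        blsDensity (studentTGen ν) η₁ η₂ σ₁ σ₂ ρ (s, t₂)) :
    ∀ t₁ : ℝ, 0 < t₁ →
      (∫ t₂ in B, blsDensity (studentTGen ν) η₁ η₂ σ₁ σ₂ ρ (t₁, t₂))
          / (∫ s in Ioi (0 : ℝ), ∫ t₂ in B, blsDensity (studentTGen ν) η₁ η₂ σ₁ σ₂ ρ (s, t₂))
        = (1 / (t₁ * σ₁)) * studentTPDF ν (logStd η₁ σ₁ t₁)
            * (∫ x in (fun w => Real.sqrt ((ν + 1) / (ν + logStd η₁ σ₁ t₁ ^ 2)) * w) ''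
                  ((fun b => ((Real.log b - Real.log η₂) / σ₂ - ρ * logStd η₁ σ₁ t₁)
                    / Real.sqrt (1 - ρ ^ 2)) '' B),
                studentTPDF (ν + 1) x)
            / (∫ x in (fun b => (Real.log b - Real.log η₂) / σ₂) '' B, studentTPDF ν x) :=
  bls_student_conditional_density_given_set_general ν hν η₁ η₂ σ₁ σ₂ ρ hσ₁ hσ₂ hρ B hB hBsub
end

section
/- Let g_c, g_{c₁}, g_{c₂} : ℝ → ℝ be density generators such that g_c(x² + y²) = g_{c₁}(x²) · g_{c₂}(y²) for all (x,y) ∈ ℝ², and suppose ρ = 0. For i = 1,2 define Z_{g_{c_i}} = ∫_ℝ g_{c_i}(z²) dz and the univariate log-symmetric density f_i(t) = g_{c_i}(t̃ᵢ²)/(t σᵢ Z_{g_{c_i}}) for t > 0, where t̃ᵢ = (log t − log ηᵢ)/σᵢ. Then: (i) Z_{g_c} := π ∫₀^∞ g_c(u) du = Z_{g_{c₁}} · Z_{g_{c₂}}; (ii) the BLS(η₁,η₂,σ₁,σ₂,0; g_c) density factorizes as f(t₁,t₂) = f₁(t₁) f₂(t₂) for all t₁, t₂ > 0; and (iii) if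 the random vector (T₁,T₂) has joint density f, then T₁ and T₂ are independent with marginal densities f₁ and f₂, respectively. -/
/-!
Polar coordinates give `∫_{ℝ²} g(x² + y²) = π ∫₀^∞ g`, while the factorization of `g` and
Tonelli give `Z_{g₁} Z_{g₂}` for the same integral. This is (i), and since `π ∫₀^∞ g` is finite
and positive, so are both `Z_{gᵢ}`. Given (i), the BLS density at `ρ = 0` is the product of the
two univariate densities, each of which integrates to one after the substitution
`log t = log η + σ z`. Hence the law of `(T₁, T₂)` is a product of probability measures, which
means independence with those marginals.
-/

open MeasureTheory ProbabilityTheory Real Set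

/-- The univariate log-symmetric density with generator `g`, median `η` and power `σ`. -/
noncomputable def univLogSymmDensity (g : ℝ → ℝ) (η σ t : ℝ) : ℝ :=
  g (logStd η σ t ^ 2) / (t * σ * ∫ z : ℝ, g (z ^ 2))

open scoped ENNReal

theorem lintegral_Ioi_eq_two_mul_lintegral_Ioi_sq (f : ℝ → ℝ≥0∞) :
    ∫⁻ u in Ioi (0 : ℝ), f u = 2 * ∫⁻ r in Ioi (0 : ℝ), ENNReal.ofReal r * f (r ^ 2) := by
  have himage : (fun r : ℝ => r ^ 2) '' Ioi 0 = Ioi 0 := by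
    refine Subset.antisymm ?_ fun u (hu : 0 < u) => ⟨√u, Real.sqrt_pos.2 hu, Real.sq_sqrt hu.le⟩
    exact image_subset_iff.2 fun r (hr : 0 < r) => show 0 < r ^ 2 from pow_pos hr 2
  have hderiv (r : ℝ) (_ : r ∈ Ioi (0 : ℝ)) :
      HasDerivWithinAt (fun r : ℝ => r ^ 2) (2 * r) (Ioi 0) r := by
    simpa using (hasDerivAt_pow 2 r).hasDerivWithinAt
  have hinj : InjOn (fun r : ℝ => r ^ 2) (Ioi 0) :=
    (pow_left_strictMonoOn₀ two_ne_zero).injOn.mono Ioi_subset_Ici_self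
  rw [← lintegral_const_mul' _ _ ENNReal.ofNat_ne_top]
  nth_rewrite 1 [← himage]
  rw [lintegral_image_eq_lintegral_abs_deriv_mul measurableSet_Ioi hderiv hinj]
  refine setLIntegral_congr_fun measurableSet_Ioi fun r (hr : 0 < r) => ?_
  rw [abs_of_pos (by positivity), ENNReal.ofReal_mul zero_le_two, ENNReal.ofReal_ofNat, mul_assoc]

theorem lintegral_comp_sq_add_sq {f : ℝ → ℝ≥0∞} (hf : Measurable f) :
    ∫⁻ p : ℝ × ℝ, f (p.1 ^ 2 + p.2 ^ 2) = ENNReal.ofReal π * ∫⁻ u in Ioi (0 : ℝ), f u := by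
  have hpolar (p : ℝ × ℝ) : (polarCoord.symm p).1 ^ 2 + (polarCoord.symm p).2 ^ 2 = p.1 ^ 2 := by
    simp only [polarCoord_symm_apply]
    linear_combination p.1 ^ 2 * cos_sq_add_sin_sq p.2
  have hradial : Measurable fun r : ℝ => ENNReal.ofReal r * f (r ^ 2) := by fun_prop
  calc ∫⁻ p : ℝ × ℝ, f (p.1 ^ 2 + p.2 ^ 2)
      = ∫⁻ p in Ioi (0 : ℝ) ×ˢ Ioo (-π) π, ENNReal.ofReal p.1 * f (p.1 ^ 2) * 1 := by
        simp only [← lintegral_comp_polarCoord_symm, hpolar, polarCoord_target, smul_eq_mul,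
          mul_one]
    _ = (∫⁻ r in Ioi (0 : ℝ), ENNReal.ofReal r * f (r ^ 2)) * ∫⁻ _ in Ioo (-π) π, 1 := by
        rw [Measure.volume_eq_prod, ← Measure.prod_restrict]
        exact lintegral_prod_mul hradial.aemeasurable aemeasurable_const
    _ = ENNReal.ofReal π * ∫⁻ u in Ioi (0 : ℝ), f u := by
        rw [lintegral_Ioi_eq_two_mul_lintegral_Ioi_sq f, setLIntegral_one, Real.volume_Ioo,
          sub_neg_eq_add, ← two_mul, ENNReal.ofReal_mul zero_le_two, ENNReal.ofReal_ofNat]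
        ring

theorem lintegral_Ioi_eq_lintegral_comp_exp_affine (f : ℝ → ℝ≥0∞) (a : ℝ) {σ : ℝ} (hσ : 0 < σ) :
    ∫⁻ t in Ioi (0 : ℝ), f t
      = ∫⁻ z, ENNReal.ofReal (Real.exp (a + σ * z) * σ) * f (Real.exp (a + σ * z)) := by
  have himage : (fun z => Real.exp (a + σ * z)) '' univ = Ioi 0 := by
    have haffine : Function.Surjective fun z => a + σ * z := fun x =>
      ⟨(x - a) / σ, by field_simp; ring⟩
    rw [image_univ, ← Real.range_exp]
    exact haffine.range_comp Real.exp
  have hderiv (z : ℝ) (_ : z ∈ univ) :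
      HasDerivWithinAt (fun z => Real.exp (a + σ * z)) (Real.exp (a + σ * z) * σ) univ z :=
    hasDerivWithinAt_univ.2 <| by
      simpa using (((hasDerivAt_id z).const_mul σ).const_add a).exp
  have hinj : InjOn (fun z => Real.exp (a + σ * z)) univ := fun x _ y _ h => by
    simpa [hσ.ne'] using Real.exp_injective h
  rw [← himage, lintegral_image_eq_lintegral_abs_deriv_mul MeasurableSet.univ hderiv hinj,
    Measure.restrict_univ]
  refine lintegral_congr fun z => ?_
  rw [abs_of_pos (by positivity)]

theorem integrable_and_integral_pos_of_lintegral_ofReal {α : Type*} [MeasurableSpace α]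
    {μ : Measure α} {f : α → ℝ} (hf : AEStronglyMeasurable f μ) (hf_nonneg : 0 ≤ᵐ[μ] f)
    (h_ne_zero : ∫⁻ a, ENNReal.ofReal (f a) ∂μ ≠ 0) (h_ne_top : ∫⁻ a, ENNReal.ofReal (f a) ∂μ ≠ ∞) :
    Integrable f μ ∧ 0 < ∫ a, f a ∂μ := by
  have hint := (lintegral_ofReal_ne_top_iff_integrable hf hf_nonneg).1 h_ne_top
  refine ⟨hint, ENNReal.ofReal_pos.1 ?_⟩
  rw [ofReal_integral_eq_lintegral_ofReal hint hf_nonneg]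
  exact pos_iff_ne_zero.2 h_ne_zero

theorem lintegral_sq_mul_lintegral_sq_eq_of_factorization {g g₁ g₂ : ℝ → ℝ} (hg : Measurable g)
    (hg₁ : Measurable g₁) (hg₂ : Measurable g₂) (hg₁_nonneg : ∀ x, 0 ≤ g₁ x)
    (hfact : ∀ x y : ℝ, g (x ^ 2 + y ^ 2) = g₁ (x ^ 2) * g₂ (y ^ 2)) :
    (∫⁻ z, ENNReal.ofReal (g₁ (z ^ 2))) * ∫⁻ z, ENNReal.ofReal (g₂ (z ^ 2))
      = ENNReal.ofReal π * ∫⁻ u in Ioi (0 : ℝ), ENNReal.ofReal (g u) := by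
  rw [← lintegral_comp_sq_add_sq hg.ennreal_ofReal, Measure.volume_eq_prod,
    ← lintegral_prod_mul (by fun_prop) (by fun_prop)]
  simp only [hfact, ENNReal.ofReal_mul (hg₁_nonneg _)]

theorem integrable_and_integral_pos_of_factorization {g g₁ g₂ : ℝ → ℝ} (hg : Measurable g)
    (hg₁ : Measurable g₁) (hg₂ : Measurable g₂) (hg₁_nonneg : ∀ x, 0 ≤ g₁ x)
    (hfact : ∀ x y : ℝ, g (x ^ 2 + y ^ 2) = g₁ (x ^ 2) * g₂ (y ^ 2)) (hg_nonneg : ∀ x, 0 ≤ g x)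
    (hg_int : IntegrableOn g (Ioi 0)) (hg_pos : 0 < ∫ u in Ioi (0 : ℝ), g u) :
    Integrable (fun z => g₁ (z ^ 2)) ∧ 0 < ∫ z, g₁ (z ^ 2) := by
  have hG := ofReal_integral_eq_lintegral_ofReal hg_int (ae_of_all _ hg_nonneg)
  have hprod := lintegral_sq_mul_lintegral_sq_eq_of_factorization hg hg₁ hg₂ hg₁_nonneg hfact
  rw [← hG, ← ENNReal.ofReal_mul pi_pos.le] at hprod
  have hne_zero : (∫⁻ z, ENNReal.ofReal (g₁ (z ^ 2))) * ∫⁻ z, ENNReal.ofReal (g₂ (z ^ 2)) ≠ 0 := by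
    rw [hprod]
    exact (ENNReal.ofReal_pos.2 (mul_pos pi_pos hg_pos)).ne'
  have hne_top : (∫⁻ z, ENNReal.ofReal (g₁ (z ^ 2))) * ∫⁻ z, ENNReal.ofReal (g₂ (z ^ 2)) ≠ ∞ :=
    hprod ▸ ENNReal.ofReal_ne_top
  exact integrable_and_integral_pos_of_lintegral_ofReal
    (hg₁.comp (measurable_id.pow_const 2)).aestronglyMeasurable
    (ae_of_all _ fun _ => hg₁_nonneg _) (left_ne_zero_of_mul hne_zero)
    (ENNReal.lt_top_of_mul_ne_top_left hne_top (right_ne_zero_of_mul hne_zero)).ne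

theorem pi_mul_integral_Ioi_eq_mul_of_factorization {g g₁ g₂ : ℝ → ℝ} (hg : Measurable g)
    (hg₁ : Measurable g₁) (hg₂ : Measurable g₂) (hg_nonneg : ∀ x, 0 ≤ g x)
    (hg₁_nonneg : ∀ x, 0 ≤ g₁ x) (hg₂_nonneg : ∀ x, 0 ≤ g₂ x)
    (hfact : ∀ x y : ℝ, g (x ^ 2 + y ^ 2) = g₁ (x ^ 2) * g₂ (y ^ 2))
    (hg_int : IntegrableOn g (Ioi 0)) (hint₁ : Integrable fun z => g₁ (z ^ 2))
    (hint₂ : Integrable fun z => g₂ (z ^ 2)) :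
    π * ∫ u in Ioi (0 : ℝ), g u = (∫ z, g₁ (z ^ 2)) * ∫ z, g₂ (z ^ 2) := by
  have hZ₁_nonneg : 0 ≤ ∫ z, g₁ (z ^ 2) := integral_nonneg fun _ => hg₁_nonneg _
  rw [← ENNReal.ofReal_eq_ofReal_iff
      (mul_nonneg pi_pos.le (integral_nonneg fun _ => hg_nonneg _))
      (mul_nonneg hZ₁_nonneg (integral_nonneg fun _ => hg₂_nonneg _)),
    ENNReal.ofReal_mul pi_pos.le, ENNReal.ofReal_mul hZ₁_nonneg,
    ofReal_integral_eq_lintegral_ofReal hg_int (ae_of_all _ hg_nonneg),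
    ofReal_integral_eq_lintegral_ofReal hint₁ (ae_of_all _ fun _ => hg₁_nonneg _),
    ofReal_integral_eq_lintegral_ofReal hint₂ (ae_of_all _ fun _ => hg₂_nonneg _),
    lintegral_sq_mul_lintegral_sq_eq_of_factorization hg hg₁ hg₂ hg₁_nonneg hfact]

theorem blsDensity_zero_eq_mul {g g₁ g₂ : ℝ → ℝ}
    (hfact : ∀ x y : ℝ, g (x ^ 2 + y ^ 2) = g₁ (x ^ 2) * g₂ (y ^ 2))
    (hZ : π * ∫ u in Ioi (0 : ℝ), g u = (∫ z, g₁ (z ^ 2)) * ∫ z, g₂ (z ^ 2))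
    (η₁ η₂ σ₁ σ₂ : ℝ) {t₁ t₂ : ℝ} (ht₁ : 0 < t₁) (ht₂ : 0 < t₂) :
    blsDensity g η₁ η₂ σ₁ σ₂ 0 (t₁, t₂)
      = univLogSymmDensity g₁ η₁ σ₁ t₁ * univLogSymmDensity g₂ η₂ σ₂ t₂ := by
  rw [blsDensity, if_pos ⟨ht₁, ht₂⟩, univLogSymmDensity, univLogSymmDensity, div_mul_div_comm,
    hZ, ← hfact]
  simp only [zero_pow two_ne_zero, mul_zero, zero_mul, sub_zero, div_one, Real.sqrt_one, mul_one]
  ring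

theorem logStd_exp_log_add_mul (η : ℝ) {σ : ℝ} (hσ : σ ≠ 0) (z : ℝ) :
    logStd η σ (Real.exp (Real.log η + σ * z)) = z := by
  rw [logStd, Real.log_exp, add_sub_cancel_left, mul_div_cancel_left₀ _ hσ]

theorem univLogSymmDensity_nonneg {g : ℝ → ℝ} (hg : ∀ x, 0 ≤ g x) (η : ℝ) {σ t : ℝ}
    (hσ : 0 ≤ σ) (ht : 0 ≤ t) : 0 ≤ univLogSymmDensity g η σ t :=
  div_nonneg (hg _) (mul_nonneg (mul_nonneg ht hσ) (integral_nonneg fun _ => hg _))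

noncomputable def univLogSymmPdf (g : ℝ → ℝ) (η σ t : ℝ) : ℝ≥0∞ :=
  ENNReal.ofReal (if 0 < t then univLogSymmDensity g η σ t else 0)

theorem measurable_univLogSymmPdf {g : ℝ → ℝ} (hg : Measurable g) (η σ : ℝ) :
    Measurable (univLogSymmPdf g η σ) :=
  (Measurable.ite measurableSet_Ioi (by unfold univLogSymmDensity logStd; fun_prop)
    measurable_const).ennreal_ofReal

theorem isProbabilityMeasure_withDensity_univLogSymmPdf {g : ℝ → ℝ} (hg : ∀ x, 0 ≤ g x)
    (hint : Integrable fun z => g (z ^ 2)) (hZ : 0 < ∫ z, g (z ^ 2)) (η : ℝ) {σ : ℝ}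
    (hσ : 0 < σ) : IsProbabilityMeasure (volume.withDensity (univLogSymmPdf g η σ)) := by
  have hpdf : univLogSymmPdf g η σ
      = (Ioi 0).indicator fun t => ENNReal.ofReal (univLogSymmDensity g η σ t) := by
    ext t
    by_cases ht : 0 < t <;> simp [univLogSymmPdf, ht]
  have hsubst (z : ℝ) : ENNReal.ofReal (Real.exp (Real.log η + σ * z) * σ)
      * ENNReal.ofReal (univLogSymmDensity g η σ (Real.exp (Real.log η + σ * z)))
      = ENNReal.ofReal (g (z ^ 2) / ∫ z, g (z ^ 2)) := by
    rw [← ENNReal.ofReal_mul (by positivity), univLogSymmDensity,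
      logStd_exp_log_add_mul η hσ.ne' z]
    congr 1
    field_simp
  constructor
  rw [withDensity_apply _ MeasurableSet.univ, Measure.restrict_univ, hpdf,
    lintegral_indicator measurableSet_Ioi,
    lintegral_Ioi_eq_lintegral_comp_exp_affine _ (Real.log η) hσ, lintegral_congr hsubst,
    ← ofReal_integral_eq_lintegral_ofReal (hint.div_const _)
      (ae_of_all _ fun _ => div_nonneg (hg _) hZ.le),
    integral_div, div_self hZ.ne', ENNReal.ofReal_one]

theorem withDensity_blsDensity_zero_eq_prod {g g₁ g₂ : ℝ → ℝ} (hg₁ : Measurable g₁)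
    (hg₂ : Measurable g₂) (hg₁_nonneg : ∀ x, 0 ≤ g₁ x)
    (hfact : ∀ x y : ℝ, g (x ^ 2 + y ^ 2) = g₁ (x ^ 2) * g₂ (y ^ 2))
    (hZ : π * ∫ u in Ioi (0 : ℝ), g u = (∫ z, g₁ (z ^ 2)) * ∫ z, g₂ (z ^ 2))
    (η₁ η₂ : ℝ) {σ₁ : ℝ} (hσ₁ : 0 ≤ σ₁) (σ₂ : ℝ) :
    volume.withDensity (fun t => ENNReal.ofReal (blsDensity g η₁ η₂ σ₁ σ₂ 0 t))
      = (volume.withDensity (univLogSymmPdf g₁ η₁ σ₁)).prod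
          (volume.withDensity (univLogSymmPdf g₂ η₂ σ₂)) := by
  rw [prod_withDensity (measurable_univLogSymmPdf hg₁ η₁ σ₁) (measurable_univLogSymmPdf hg₂ η₂ σ₂),
    ← Measure.volume_eq_prod]
  congr with ⟨t₁, t₂⟩
  by_cases ht₁ : 0 < t₁
  · by_cases ht₂ : 0 < t₂
    · simp only [univLogSymmPdf, if_pos ht₁, if_pos ht₂,
        blsDensity_zero_eq_mul hfact hZ _ _ _ _ ht₁ ht₂,
        ENNReal.ofReal_mul (univLogSymmDensity_nonneg hg₁_nonneg η₁ hσ₁ ht₁.le)]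
    · simp [univLogSymmPdf, blsDensity, ht₂]
  · simp [univLogSymmPdf, blsDensity, ht₁]

theorem ProbabilityTheory.indepFun_and_map_eq_of_map_prod_eq {Ω α β : Type*}
    [MeasurableSpace Ω] [MeasurableSpace α] [MeasurableSpace β] {P : Measure Ω}
    {X : Ω → α} {Y : Ω → β} (hX : Measurable X) (hY : Measurable Y) {μ : Measure α}
    {ν : Measure β} [IsProbabilityMeasure μ] [IsProbabilityMeasure ν]
    (h : P.map (fun ω => (X ω, Y ω)) = μ.prod ν) :
    IndepFun X Y P ∧ P.map X = μ ∧ P.map Y = ν := by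
  have hX_map : P.map X = μ := by rw [← Measure.fst_map_prodMk hY, h, Measure.fst_prod]
  have hY_map : P.map Y = ν := by rw [← Measure.snd_map_prodMk hX, h, Measure.snd_prod]
  refine ⟨(indepFun_iff_map_prod_eq_prod_map_map' hX.aemeasurable hY.aemeasurable
    (hX_map ▸ inferInstance) (hY_map ▸ inferInstance)).2 ?_, hX_map, hY_map⟩
  rw [h, hX_map, hY_map]

theorem bls_independence_of_factorized_generator_general
    {Ω : Type*} [MeasurableSpace Ω] (P : Measure Ω)
    (g g₁ g₂ : ℝ → ℝ)
    (hg_meas : Measurable g) (hg_nonneg : ∀ x, 0 ≤ g x)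
    (hg_pos : 0 < ∫ u in Ioi (0 : ℝ), g u) (hg_int : IntegrableOn g (Ioi 0))
    (hg₁_meas : Measurable g₁) (hg₁_nonneg : ∀ x, 0 ≤ g₁ x)
    (hg₂_meas : Measurable g₂) (hg₂_nonneg : ∀ x, 0 ≤ g₂ x)
    (hfact : ∀ x y : ℝ, g (x ^ 2 + y ^ 2) = g₁ (x ^ 2) * g₂ (y ^ 2))
    (η₁ η₂ σ₁ σ₂ : ℝ) (hσ₁ : 0 < σ₁) (hσ₂ : 0 < σ₂)
    (T₁ T₂ : Ω → ℝ) (hT₁ : Measurable T₁) (hT₂ : Measurable T₂)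
    (hT : Measure.map (fun ω => (T₁ ω, T₂ ω)) P
      = (volume : Measure (ℝ × ℝ)).withDensity
          (fun t => ENNReal.ofReal (blsDensity g η₁ η₂ σ₁ σ₂ 0 t))) :
    ((π * ∫ u in Ioi (0 : ℝ), g u)
        = (∫ z : ℝ, g₁ (z ^ 2)) * ∫ z : ℝ, g₂ (z ^ 2)) ∧
    (∀ t₁ t₂ : ℝ, 0 < t₁ → 0 < t₂ →
        blsDensity g η₁ η₂ σ₁ σ₂ 0 (t₁, t₂)
          = univLogSymmDensity g₁ η₁ σ₁ t₁ * univLogSymmDensity g₂ η₂ σ₂ t₂) ∧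
    (IndepFun T₁ T₂ P ∧
      Measure.map T₁ P = volume.withDensity
        (fun t => ENNReal.ofReal (if 0 < t then univLogSymmDensity g₁ η₁ σ₁ t else 0)) ∧
      Measure.map T₂ P = volume.withDensity
        (fun t => ENNReal.ofReal (if 0 < t then univLogSymmDensity g₂ η₂ σ₂ t else 0))) := by
  have hfact_swap (x y : ℝ) : g (x ^ 2 + y ^ 2) = g₂ (x ^ 2) * g₁ (y ^ 2) := by
    rw [add_comm, hfact, mul_comm]
  obtain ⟨hint₁, hZ₁⟩ := integrable_and_integral_pos_of_factorization hg_meas hg₁_meas hg₂_meas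
    hg₁_nonneg hfact hg_nonneg hg_int hg_pos
  obtain ⟨hint₂, hZ₂⟩ := integrable_and_integral_pos_of_factorization hg_meas hg₂_meas hg₁_meas
    hg₂_nonneg hfact_swap hg_nonneg hg_int hg_pos
  have hZ := pi_mul_integral_Ioi_eq_mul_of_factorization hg_meas hg₁_meas hg₂_meas hg_nonneg
    hg₁_nonneg hg₂_nonneg hfact hg_int hint₁ hint₂
  have := isProbabilityMeasure_withDensity_univLogSymmPdf hg₁_nonneg hint₁ hZ₁ η₁ hσ₁
  have := isProbabilityMeasure_withDensity_univLogSymmPdf hg₂_nonneg hint₂ hZ₂ η₂ hσ₂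
  have hprod : Measure.map (fun ω => (T₁ ω, T₂ ω)) P
      = (volume.withDensity (univLogSymmPdf g₁ η₁ σ₁)).prod
          (volume.withDensity (univLogSymmPdf g₂ η₂ σ₂)) := by
    rw [hT, withDensity_blsDensity_zero_eq_prod hg₁_meas hg₂_meas hg₁_nonneg hfact hZ η₁ η₂
      hσ₁.le σ₂]
  obtain ⟨hindep, hmap₁, hmap₂⟩ := indepFun_and_map_eq_of_map_prod_eq hT₁ hT₂ hprod
  exact ⟨hZ, fun t₁ t₂ => blsDensity_zero_eq_mul hfact hZ η₁ η₂ σ₁ σ₂, hindep, hmap₁, hmap₂⟩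

/-- If the generator factorizes as `g(x²+y²) = g₁(x²) g₂(y²)` and `ρ = 0`,
then the BLS partition function factorizes, the BLS density factorizes into the product of
the univariate log-symmetric densities, and the components of a BLS random vector are
independent with those marginal densities. -/
theorem bls_independence_of_factorized_generator
    {Ω : Type*} [MeasurableSpace Ω] (P : Measure Ω) [IsProbabilityMeasure P]
    (g g₁ g₂ : ℝ → ℝ)
    (hg_meas : Measurable g) (hg_nonneg : ∀ x, 0 ≤ g x)
    (hg_pos : 0 < ∫ u in Ioi (0 : ℝ), g u) (hg_int : IntegrableOn g (Ioi 0))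
    (hg₁_meas : Measurable g₁) (hg₁_nonneg : ∀ x, 0 ≤ g₁ x)
    (hg₁_pos : 0 < ∫ u in Ioi (0 : ℝ), g₁ u) (hg₁_int : IntegrableOn g₁ (Ioi 0))
    (hg₂_meas : Measurable g₂) (hg₂_nonneg : ∀ x, 0 ≤ g₂ x)
    (hg₂_pos : 0 < ∫ u in Ioi (0 : ℝ), g₂ u) (hg₂_int : IntegrableOn g₂ (Ioi 0))
    (hfact : ∀ x y : ℝ, g (x ^ 2 + y ^ 2) = g₁ (x ^ 2) * g₂ (y ^ 2))
    (η₁ η₂ σ₁ σ₂ : ℝ) (hη₁ : 0 < η₁) (hη₂ : 0 < η₂) (hσ₁ : 0 < σ₁) (hσ₂ : 0 < σ₂)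
    (T₁ T₂ : Ω → ℝ) (hT₁ : Measurable T₁) (hT₂ : Measurable T₂)
    (hT : Measure.map (fun ω => (T₁ ω, T₂ ω)) P
      = (volume : Measure (ℝ × ℝ)).withDensity
          (fun t => ENNReal.ofReal (blsDensity g η₁ η₂ σ₁ σ₂ 0 t))) :
    ((π * ∫ u in Ioi (0 : ℝ), g u)
        = (∫ z : ℝ, g₁ (z ^ 2)) * ∫ z : ℝ, g₂ (z ^ 2)) ∧
    (∀ t₁ t₂ : ℝ, 0 < t₁ → 0 < t₂ →
        blsDensity g η₁ η₂ σ₁ σ₂ 0 (t₁, t₂)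
          = univLogSymmDensity g₁ η₁ σ₁ t₁ * univLogSymmDensity g₂ η₂ σ₂ t₂) ∧
    (IndepFun T₁ T₂ P ∧
      Measure.map T₁ P = volume.withDensity
        (fun t => ENNReal.ofReal (if 0 < t then univLogSymmDensity g₁ η₁ σ₁ t else 0)) ∧
      Measure.map T₂ P = volume.withDensity
        (fun t => ENNReal.ofReal (if 0 < t then univLogSymmDensity g₂ η₂ σ₂ t else 0))) :=
  bls_independence_of_factorized_generator_general P g g₁ g₂ hg_meas hg_nonneg hg_pos hg_int
    hg₁_meas hg₁_nonneg hg₂_meas hg₂_nonneg hfact η₁ η₂ σ₁ σ₂ hσ₁ hσ₂ T₁ T₂ hT₁ hT₂ hT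
end

section
/- Let g_c : ℝ → ℝ be a density generator and let (T₁, T₂) have the BLS(η₁,η₂,σ₁,σ₂,ρ; g_c) density. Then the random vectors (η₁/T₁, η₂/T₂) and (T₁/η₁, T₂/η₂) are identically distributed, and each has joint probability density (w₁,w₂) ↦ g_c((w̃₁² − 2ρ w̃₁ w̃₂ + w̃₂²)/(1−ρ²)) / (w₁ w₂ σ₁ σ₂ √(1−ρ²) Z_{g_c}) for w₁, w₂ > 0, where w̃ᵢ = (log wᵢ)/σᵢ; that is, both follow the BLS(1,1,σ₁,σ₂,ρ; g_c) distribution. -/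
open MeasureTheory Real Set

/-!
Both maps act coordinatewise on the positive quadrant, so the change-of-variables formula
reduces to one-dimensional Jacobians. Dividing by `c` shifts `log t` by `-log c`, which turns
`BLS(η₁,η₂)` into `BLS(η₁/c₁,η₂/c₂)`; inversion negates both standardized logarithms, which
leaves the quadratic form `(a² − 2ρab + b²)/(1−ρ²)` unchanged and turns `BLS(η₁,η₂)` into
`BLS(η₁⁻¹,η₂⁻¹)`. Since `η/T = (T/η)⁻¹`, both vectors follow `BLS(1,1)`.
-/

open Function
open scoped ENNReal

theorem map_withDensity_eq_withDensity_of_bijOn {E : Type*} [NormedAddCommGroup E]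
    [NormedSpace ℝ E] [FiniteDimensional ℝ E] [MeasurableSpace E] [BorelSpace E]
    {μ : Measure E} [μ.IsAddHaarMeasure] {Q : Set E} (hQ : MeasurableSet Q)
    {F G : E → ℝ≥0∞} (hF : support F ⊆ Q) (hG : support G ⊆ Q) {h k : E → E}
    (hh : Measurable h) (hk : BijOn k Q Q) (hhk : LeftInvOn h k Q) {k' : E → E →L[ℝ] E}
    (hk' : ∀ x ∈ Q, HasFDerivWithinAt k (k' x) Q x)
    (hFG : ∀ x ∈ Q, ENNReal.ofReal |(k' x).det| * F (k x) = G x) :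
    (μ.withDensity F).map h = μ.withDensity G := by
  have lintegral_inter : ∀ {f : E → ℝ≥0∞}, support f ⊆ Q →
      ∀ s, ∫⁻ x in s ∩ Q, f x ∂μ = ∫⁻ x in s, f x ∂μ := fun hf s => by
    rw [inter_comm, ← Measure.restrict_restrict hQ, setLIntegral_eq_of_support_subset hf]
  ext s hs
  rw [Measure.map_apply hh hs, withDensity_apply _ (hh hs), withDensity_apply _ hs,
    ← lintegral_inter hF, ← lintegral_inter hG]
  calc ∫⁻ x in h ⁻¹' s ∩ Q, F x ∂μ = ∫⁻ x in k '' (s ∩ Q), F x ∂μ := by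
        rw [hhk.image_inter', hk.image_eq]
    _ = ∫⁻ x in s ∩ Q, ENNReal.ofReal |(k' x).det| * F (k x) ∂μ :=
        lintegral_image_eq_lintegral_abs_det_fderiv_mul μ (hs.inter hQ)
          (fun x hx => (hk' x hx.2).mono inter_subset_right) (hk.injOn.mono inter_subset_right) F
    _ = ∫⁻ x in s ∩ Q, G x ∂μ := setLIntegral_congr_fun (hs.inter hQ) fun x hx => hFG x hx.2

theorem map_prodMap_withDensity_eq_withDensity {s₁ s₂ : Set ℝ} (hs₁ : MeasurableSet s₁)
    (hs₂ : MeasurableSet s₂) {F G : ℝ × ℝ → ℝ≥0∞} (hF : support F ⊆ s₁ ×ˢ s₂)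
    (hG : support G ⊆ s₁ ×ˢ s₂) {h₁ h₂ k₁ k₂ k₁' k₂' : ℝ → ℝ} (hh₁ : Measurable h₁)
    (hh₂ : Measurable h₂) (hk₁ : BijOn k₁ s₁ s₁) (hk₂ : BijOn k₂ s₂ s₂)
    (hhk₁ : LeftInvOn h₁ k₁ s₁) (hhk₂ : LeftInvOn h₂ k₂ s₂)
    (hk₁' : ∀ x ∈ s₁, HasDerivWithinAt k₁ (k₁' x) s₁ x)
    (hk₂' : ∀ x ∈ s₂, HasDerivWithinAt k₂ (k₂' x) s₂ x)
    (hFG : ∀ x ∈ s₁ ×ˢ s₂, ENNReal.ofReal |k₁' x.1 * k₂' x.2| * F (k₁ x.1, k₂ x.2) = G x) :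
    (volume.withDensity F).map (fun x => (h₁ x.1, h₂ x.2)) = volume.withDensity G := by
  refine map_withDensity_eq_withDensity_of_bijOn (hs₁.prod hs₂) hF hG
    ((hh₁.comp measurable_fst).prodMk (hh₂.comp measurable_snd)) (hk₁.prodMap hk₂)
    (hhk₁.prodMap hhk₂) (k' := fun x => (ContinuousLinearMap.toSpanSingleton ℝ (k₁' x.1)).prodMap
      (ContinuousLinearMap.toSpanSingleton ℝ (k₂' x.2))) (fun x hx => ?_) (fun x hx => ?_)
  · have h1 := (hk₁' x.1 hx.1).hasFDerivWithinAt.mono (fst_image_prod_subset s₁ s₂)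
    have h2 := (hk₂' x.2 hx.2).hasFDerivWithinAt.mono (snd_image_prod_subset s₁ s₂)
    exact HasFDerivWithinAt.prodMap (p := x) h1 h2
  · have hdet : ((ContinuousLinearMap.toSpanSingleton ℝ (k₁' x.1)).prodMap
        (ContinuousLinearMap.toSpanSingleton ℝ (k₂' x.2))).det = k₁' x.1 * k₂' x.2 := by
      simp [ContinuousLinearMap.det, LinearMap.det_prodMap]
    rw [hdet]
    exact hFG x hx

noncomputable def blsMeasure (g : ℝ → ℝ) (η₁ η₂ σ₁ σ₂ ρ : ℝ) : Measure (ℝ × ℝ) :=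
  volume.withDensity fun t => ENNReal.ofReal (blsDensity g η₁ η₂ σ₁ σ₂ ρ t)

section BLS

variable {g : ℝ → ℝ} {η₁ η₂ σ₁ σ₂ ρ : ℝ}

theorem support_ofReal_blsDensity_subset :
    support (fun t => ENNReal.ofReal (blsDensity g η₁ η₂ σ₁ σ₂ ρ t)) ⊆ Ioi 0 ×ˢ Ioi 0 :=
  (support_comp_subset ENNReal.ofReal_zero _).trans fun _ ht => by
    by_contra hQ
    exact ht (if_neg hQ)

theorem logStd_mul {η σ c t : ℝ} (hη : η ≠ 0) (hc : c ≠ 0) (ht : t ≠ 0) :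
    logStd η σ (c * t) = logStd (η / c) σ t := by
  simp only [logStd, Real.log_mul hc ht, Real.log_div hη hc]
  ring

theorem logStd_inv (η σ t : ℝ) : logStd η σ t⁻¹ = -logStd η⁻¹ σ t := by
  simp only [logStd, Real.log_inv]
  ring

theorem blsDensity_mul {c₁ c₂ : ℝ} (hc₁ : 0 < c₁) (hc₂ : 0 < c₂) (hη₁ : η₁ ≠ 0) (hη₂ : η₂ ≠ 0)
    (t : ℝ × ℝ) :
    c₁ * c₂ * blsDensity g η₁ η₂ σ₁ σ₂ ρ (c₁ * t.1, c₂ * t.2)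
      = blsDensity g (η₁ / c₁) (η₂ / c₂) σ₁ σ₂ ρ t := by
  simp only [blsDensity, mul_pos_iff_of_pos_left hc₁, mul_pos_iff_of_pos_left hc₂]
  split_ifs with ht
  · rw [logStd_mul hη₁ hc₁.ne' ht.1.ne', logStd_mul hη₂ hc₂.ne' ht.2.ne']
    field_simp
  · rw [mul_zero]

theorem blsDensity_inv (t : ℝ × ℝ) :
    (t.1 ^ 2)⁻¹ * (t.2 ^ 2)⁻¹ * blsDensity g η₁ η₂ σ₁ σ₂ ρ (t.1⁻¹, t.2⁻¹)
      = blsDensity g η₁⁻¹ η₂⁻¹ σ₁ σ₂ ρ t := by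
  simp only [blsDensity, inv_pos, logStd_inv]
  split_ifs with ht
  · field_simp
  · rw [mul_zero]

theorem map_div_blsMeasure {c₁ c₂ : ℝ} (hc₁ : 0 < c₁) (hc₂ : 0 < c₂) (hη₁ : η₁ ≠ 0)
    (hη₂ : η₂ ≠ 0) :
    (blsMeasure g η₁ η₂ σ₁ σ₂ ρ).map (fun t => (t.1 / c₁, t.2 / c₂))
      = blsMeasure g (η₁ / c₁) (η₂ / c₂) σ₁ σ₂ ρ := by
  have hinv : ∀ {c : ℝ}, 0 < c → InvOn (· / c) (c * ·) (Ioi 0) (Ioi 0) := fun hc =>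
    ⟨fun t _ => by field_simp, fun t _ => by field_simp⟩
  have hbij : ∀ {c : ℝ}, 0 < c → BijOn (c * ·) (Ioi 0) (Ioi 0) := fun hc =>
    (hinv hc).bijOn (fun _ ht => mul_pos hc ht) (fun _ ht => div_pos ht hc)
  refine map_prodMap_withDensity_eq_withDensity measurableSet_Ioi measurableSet_Ioi
    support_ofReal_blsDensity_subset support_ofReal_blsDensity_subset
    (measurable_id.div_const _) (measurable_id.div_const _) (hbij hc₁) (hbij hc₂)
    (hinv hc₁).1 (hinv hc₂).1 (fun _ _ => (hasDerivAt_const_mul c₁).hasDerivWithinAt)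
    (fun _ _ => (hasDerivAt_const_mul c₂).hasDerivWithinAt) fun t _ => ?_
  rw [← ENNReal.ofReal_mul (abs_nonneg _), abs_of_pos (mul_pos hc₁ hc₂),
    blsDensity_mul hc₁ hc₂ hη₁ hη₂]

theorem map_inv_blsMeasure :
    (blsMeasure g η₁ η₂ σ₁ σ₂ ρ).map (fun t => (t.1⁻¹, t.2⁻¹))
      = blsMeasure g η₁⁻¹ η₂⁻¹ σ₁ σ₂ ρ := by
  have hinv : InvOn (·⁻¹) (·⁻¹) (Ioi (0 : ℝ)) (Ioi 0) :=
    ⟨fun t _ => inv_inv t, fun t _ => inv_inv t⟩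
  have hbij : BijOn (·⁻¹) (Ioi (0 : ℝ)) (Ioi 0) :=
    hinv.bijOn (fun _ ht => inv_pos.2 (mem_Ioi.1 ht)) (fun _ ht => inv_pos.2 (mem_Ioi.1 ht))
  refine map_prodMap_withDensity_eq_withDensity measurableSet_Ioi measurableSet_Ioi
    support_ofReal_blsDensity_subset support_ofReal_blsDensity_subset
    measurable_inv measurable_inv hbij hbij hinv.1 hinv.1
    (fun t ht => (hasDerivAt_inv (ne_of_gt ht)).hasDerivWithinAt)
    (fun t ht => (hasDerivAt_inv (ne_of_gt ht)).hasDerivWithinAt) fun t _ => ?_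
  rw [← ENNReal.ofReal_mul (abs_nonneg _), neg_mul_neg, abs_of_nonneg (by positivity),
    blsDensity_inv]

end BLS

theorem bls_reciprocal_property_general
    {Ω : Type*} [MeasurableSpace Ω] (P : Measure Ω)
    (g : ℝ → ℝ)
    (η₁ η₂ σ₁ σ₂ ρ : ℝ) (hη₁ : 0 < η₁) (hη₂ : 0 < η₂)
    (T₁ T₂ : Ω → ℝ) (hT₁ : Measurable T₁) (hT₂ : Measurable T₂)
    (hT : Measure.map (fun ω => (T₁ ω, T₂ ω)) P
      = (volume : Measure (ℝ × ℝ)).withDensity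
          (fun t => ENNReal.ofReal (blsDensity g η₁ η₂ σ₁ σ₂ ρ t))) :
    Measure.map (fun ω => (η₁ / T₁ ω, η₂ / T₂ ω)) P
        = Measure.map (fun ω => (T₁ ω / η₁, T₂ ω / η₂)) P ∧
    Measure.map (fun ω => (η₁ / T₁ ω, η₂ / T₂ ω)) P
        = (volume : Measure (ℝ × ℝ)).withDensity
            (fun w => ENNReal.ofReal (blsDensity g 1 1 σ₁ σ₂ ρ w)) ∧
    Measure.map (fun ω => (T₁ ω / η₁, T₂ ω / η₂)) P
        = (volume : Measure (ℝ × ℝ)).withDensity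
            (fun w => ENNReal.ofReal (blsDensity g 1 1 σ₁ σ₂ ρ w)) := by
  have hdiv : P.map (fun ω => (T₁ ω / η₁, T₂ ω / η₂)) = blsMeasure g 1 1 σ₁ σ₂ ρ :=
    calc P.map (fun ω => (T₁ ω / η₁, T₂ ω / η₂))
        = (blsMeasure g η₁ η₂ σ₁ σ₂ ρ).map fun t => (t.1 / η₁, t.2 / η₂) := by
          rw [blsMeasure, ← hT, Measure.map_map (by fun_prop) (hT₁.prodMk hT₂)]
          rfl
      _ = blsMeasure g (η₁ / η₁) (η₂ / η₂) σ₁ σ₂ ρ :=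
          map_div_blsMeasure hη₁ hη₂ hη₁.ne' hη₂.ne'
      _ = blsMeasure g 1 1 σ₁ σ₂ ρ := by rw [div_self hη₁.ne', div_self hη₂.ne']
  have hinv : P.map (fun ω => (η₁ / T₁ ω, η₂ / T₂ ω)) = blsMeasure g 1 1 σ₁ σ₂ ρ :=
    calc P.map (fun ω => (η₁ / T₁ ω, η₂ / T₂ ω))
        = (P.map fun ω => (T₁ ω / η₁, T₂ ω / η₂)).map fun t => (t.1⁻¹, t.2⁻¹) := by
          rw [Measure.map_map (by fun_prop) (by fun_prop)]
          simp only [comp_def, inv_div]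
      _ = blsMeasure g 1⁻¹ 1⁻¹ σ₁ σ₂ ρ := by rw [hdiv, map_inv_blsMeasure]
      _ = blsMeasure g 1 1 σ₁ σ₂ ρ := by rw [inv_one]
  exact ⟨hinv.trans hdiv.symm, hinv, hdiv⟩

/-- If `(T₁,T₂) ∼ BLS(η₁,η₂,σ₁,σ₂,ρ; g)`, then `(η₁/T₁, η₂/T₂)` and
`(T₁/η₁, T₂/η₂)` are identically distributed, each with the `BLS(1,1,σ₁,σ₂,ρ; g)`
density. -/
theorem bls_reciprocal_property
    {Ω : Type*} [MeasurableSpace Ω] (P : Measure Ω) [IsProbabilityMeasure P]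
    (g : ℝ → ℝ) (hg_meas : Measurable g) (hg_nonneg : ∀ x, 0 ≤ g x)
    (hg_pos : 0 < ∫ u in Ioi (0 : ℝ), g u) (hg_int : IntegrableOn g (Ioi 0))
    (η₁ η₂ σ₁ σ₂ ρ : ℝ) (hη₁ : 0 < η₁) (hη₂ : 0 < η₂) (hσ₁ : 0 < σ₁) (hσ₂ : 0 < σ₂)
    (hρ : ρ ∈ Ioo (-1 : ℝ) 1)
    (T₁ T₂ : Ω → ℝ) (hT₁ : Measurable T₁) (hT₂ : Measurable T₂)
    (hT : Measure.map (fun ω => (T₁ ω, T₂ ω)) P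
      = (volume : Measure (ℝ × ℝ)).withDensity
          (fun t => ENNReal.ofReal (blsDensity g η₁ η₂ σ₁ σ₂ ρ t))) :
    Measure.map (fun ω => (η₁ / T₁ ω, η₂ / T₂ ω)) P
        = Measure.map (fun ω => (T₁ ω / η₁, T₂ ω / η₂)) P ∧
    Measure.map (fun ω => (η₁ / T₁ ω, η₂ / T₂ ω)) P
        = (volume : Measure (ℝ × ℝ)).withDensity
            (fun w => ENNReal.ofReal (blsDensity g 1 1 σ₁ σ₂ ρ w)) ∧
    Measure.map (fun ω => (T₁ ω / η₁, T₂ ω / η₂)) P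
        = (volume : Measure (ℝ × ℝ)).withDensity
            (fun w => ENNReal.ofReal (blsDensity g 1 1 σ₁ σ₂ ρ w)) :=
  bls_reciprocal_property_general P g η₁ η₂ σ₁ σ₂ ρ hη₁ hη₂ T₁ T₂ hT₁ hT₂ hT
end

section
/- Let n ≥ 1 and let a₁,…,aₙ, b₁,…,bₙ be real numbers such that aᵢ ≠ bᵢ for some index i and aⱼ ≠ −bⱼ for some index j. For ρ ∈ (−1,1) and 1 ≤ i ≤ n set x_{ρ,i} = (aᵢ² − 2ρ aᵢ bᵢ + bᵢ²)/(1−ρ²). Let r : ℝ → ℝ be such that, for each i, the map ρ ↦ r(x_{ρ,i}) is continuous on (−1,1), and suppose there exists c ∈ (−∞, 0) such that for each i, r(x_{ρ,i}) → c as ρ → 1⁻ and as ρ → −1⁺. Define the score function h(ρ) = n ρ/(1−ρ²) − (2/(1−ρ²)²) Σ_{i=1}^n (ρ aᵢ − bᵢ)(ρ bᵢ − aᵢ) r(x_{ρ,i}). Then h(ρ) → −∞ as ρ → 1⁻ and h(ρ) → +∞ as ρ → −1⁺, and consequently there exists ρ̂ ∈ (−1,1) with h(ρ̂) = 0. -/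
open Real Set Filter Topology

/-- Existence of a root of the score equation for the correlation
parameter `ρ` in a bivariate log-symmetric model. With
`x_{ρ,i} = (aᵢ² − 2ρ aᵢ bᵢ + bᵢ²)/(1−ρ²)` and score function
`h(ρ) = nρ/(1−ρ²) − (2/(1−ρ²)²) Σᵢ (ρ aᵢ − bᵢ)(ρ bᵢ − aᵢ) r(x_{ρ,i})`,
if `ρ ↦ r(x_{ρ,i})` is continuous on `(−1,1)` and tends to some `c < 0` as `ρ → ±1`,
then `h → −∞` as `ρ → 1⁻`, `h → +∞` as `ρ → −1⁺`, and `h` has a root in `(−1,1)`. -/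
theorem score_equation_has_root
    (n : ℕ) (hn : 1 ≤ n) (a b : Fin n → ℝ)
    (hab : ∃ i, a i ≠ b i) (hab' : ∃ j, a j ≠ -b j)
    (r : ℝ → ℝ)
    (hcont : ∀ i, ContinuousOn
      (fun ρ => r ((a i ^ 2 - 2 * ρ * a i * b i + b i ^ 2) / (1 - ρ ^ 2)))
      (Ioo (-1 : ℝ) 1))
    (c : ℝ) (hc : c < 0)
    (hlim₁ : ∀ i, Tendsto
      (fun ρ => r ((a i ^ 2 - 2 * ρ * a i * b i + b i ^ 2) / (1 - ρ ^ 2)))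
      (𝓝[<] (1 : ℝ)) (𝓝 c))
    (hlim₂ : ∀ i, Tendsto
      (fun ρ => r ((a i ^ 2 - 2 * ρ * a i * b i + b i ^ 2) / (1 - ρ ^ 2)))
      (𝓝[>] (-1 : ℝ)) (𝓝 c))
    (h : ℝ → ℝ)
    (hdef : ∀ ρ : ℝ, h ρ = (n : ℝ) * ρ / (1 - ρ ^ 2)
      - (2 / (1 - ρ ^ 2) ^ 2) * ∑ i, (ρ * a i - b i) * (ρ * b i - a i)
          * r ((a i ^ 2 - 2 * ρ * a i * b i + b i ^ 2) / (1 - ρ ^ 2))) :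
    Tendsto h (𝓝[<] (1 : ℝ)) atBot ∧
    Tendsto h (𝓝[>] (-1 : ℝ)) atTop ∧
    ∃ ρ₀ ∈ Ioo (-1 : ℝ) 1, h ρ₀ = 0 := by
  have hpos : ∀ ρ ∈ Ioo (-1 : ℝ) 1, 0 < 1 - ρ ^ 2 := by
    intro ρ hρ; nlinarith [hρ.1, hρ.2]
  set g : ℝ → ℝ := fun ρ => (n : ℝ) * ρ * (1 - ρ ^ 2)
      - 2 * ∑ i, (ρ * a i - b i) * (ρ * b i - a i)
          * r ((a i ^ 2 - 2 * ρ * a i * b i + b i ^ 2) / (1 - ρ ^ 2)) with hg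
  have heq : ∀ ρ ∈ Ioo (-1 : ℝ) 1, h ρ = g ρ * ((1 - ρ ^ 2) ^ 2)⁻¹ := by
    intro ρ hρ
    have h0 := (hpos ρ hρ).ne'
    rw [hdef ρ, hg]
    field_simp
  -- eventual membership
  have hmem₁ : Ioo (-1 : ℝ) 1 ∈ 𝓝[<] (1 : ℝ) :=
    Ioo_mem_nhdsLT_of_mem (by constructor <;> norm_num)
  have hmem₂ : Ioo (-1 : ℝ) 1 ∈ 𝓝[>] (-1 : ℝ) :=
    Ioo_mem_nhdsGT_of_mem (by constructor <;> norm_num)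
  -- inverse square factor tends to atTop on both sides
  have hsq : ∀ {l : Filter ℝ} {v : ℝ}, Tendsto (fun ρ : ℝ => ρ) l (𝓝 v) →
      Tendsto (fun ρ : ℝ => (1 - ρ ^ 2) ^ 2) l (𝓝 ((1 - v ^ 2) ^ 2)) := by
    intro l v hl
    exact ((tendsto_const_nhds.sub (hl.pow 2)).pow 2)
  have hinv₁ : Tendsto (fun ρ : ℝ => ((1 - ρ ^ 2) ^ 2)⁻¹) (𝓝[<] (1 : ℝ)) atTop := by
    apply tendsto_inv_nhdsGT_zero.comp
    rw [tendsto_nhdsWithin_iff]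
    constructor
    · have := hsq (l := 𝓝[<] (1 : ℝ)) (v := 1) (tendsto_id.mono_left nhdsWithin_le_nhds)
      simpa using this
    · filter_upwards [hmem₁] with ρ hρ
      exact pow_pos (hpos ρ hρ) 2
  have hinv₂ : Tendsto (fun ρ : ℝ => ((1 - ρ ^ 2) ^ 2)⁻¹) (𝓝[>] (-1 : ℝ)) atTop := by
    apply tendsto_inv_nhdsGT_zero.comp
    rw [tendsto_nhdsWithin_iff]
    constructor
    · have := hsq (l := 𝓝[>] (-1 : ℝ)) (v := -1) (tendsto_id.mono_left nhdsWithin_le_nhds)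
      simpa using this
    · filter_upwards [hmem₂] with ρ hρ
      exact pow_pos (hpos ρ hρ) 2
  -- limit of g at 1⁻
  have hgl₁ : Tendsto g (𝓝[<] (1 : ℝ)) (𝓝 (-2 * ∑ i, (a i - b i) * (b i - a i) * c)) := by
    have hid : Tendsto (fun ρ : ℝ => ρ) (𝓝[<] (1 : ℝ)) (𝓝 1) :=
      tendsto_id.mono_left nhdsWithin_le_nhds
    have h1 : Tendsto (fun ρ : ℝ => (n : ℝ) * ρ * (1 - ρ ^ 2)) (𝓝[<] (1 : ℝ)) (𝓝 0) := by
      have hcc : Continuous (fun ρ : ℝ => (n : ℝ) * ρ * (1 - ρ ^ 2)) := by fun_prop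
      have := (hcc.tendsto 1).mono_left (nhdsWithin_le_nhds (s := Iio (1 : ℝ)))
      simpa using this
    have h2 : Tendsto (fun ρ : ℝ => ∑ i, (ρ * a i - b i) * (ρ * b i - a i)
        * r ((a i ^ 2 - 2 * ρ * a i * b i + b i ^ 2) / (1 - ρ ^ 2)))
        (𝓝[<] (1 : ℝ)) (𝓝 (∑ i, (a i - b i) * (b i - a i) * c)) := by
      apply tendsto_finset_sum
      intro i _
      have ht : Tendsto (fun ρ : ℝ => (ρ * a i - b i) * (ρ * b i - a i))
          (𝓝[<] (1 : ℝ)) (𝓝 ((a i - b i) * (b i - a i))) := by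
        have hcc : Continuous (fun ρ : ℝ => (ρ * a i - b i) * (ρ * b i - a i)) := by fun_prop
        have := (hcc.tendsto 1).mono_left (nhdsWithin_le_nhds (s := Iio (1 : ℝ)))
        simpa using this
      exact ht.mul (hlim₁ i)
    have := h1.sub (h2.const_mul 2)
    simpa [hg, sub_eq_add_neg, neg_mul] using this
  -- limit of g at -1⁺
  have hgl₂ : Tendsto g (𝓝[>] (-1 : ℝ)) (𝓝 (-2 * ∑ i, (-(a i) - b i) * (-(b i) - a i) * c)) := by
    have hid : Tendsto (fun ρ : ℝ => ρ) (𝓝[>] (-1 : ℝ)) (𝓝 (-1)) :=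
      tendsto_id.mono_left nhdsWithin_le_nhds
    have h1 : Tendsto (fun ρ : ℝ => (n : ℝ) * ρ * (1 - ρ ^ 2)) (𝓝[>] (-1 : ℝ)) (𝓝 0) := by
      have hcc : Continuous (fun ρ : ℝ => (n : ℝ) * ρ * (1 - ρ ^ 2)) := by fun_prop
      have := (hcc.tendsto (-1)).mono_left (nhdsWithin_le_nhds (s := Ioi (-1 : ℝ)))
      simpa using this
    have h2 : Tendsto (fun ρ : ℝ => ∑ i, (ρ * a i - b i) * (ρ * b i - a i)
        * r ((a i ^ 2 - 2 * ρ * a i * b i + b i ^ 2) / (1 - ρ ^ 2)))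
        (𝓝[>] (-1 : ℝ)) (𝓝 (∑ i, (-(a i) - b i) * (-(b i) - a i) * c)) := by
      apply tendsto_finset_sum
      intro i _
      have ht : Tendsto (fun ρ : ℝ => (ρ * a i - b i) * (ρ * b i - a i))
          (𝓝[>] (-1 : ℝ)) (𝓝 ((-(a i) - b i) * (-(b i) - a i))) := by
        have hcc : Continuous (fun ρ : ℝ => (ρ * a i - b i) * (ρ * b i - a i)) := by fun_prop
        have := (hcc.tendsto (-1)).mono_left (nhdsWithin_le_nhds (s := Ioi (-1 : ℝ)))
        simpa [neg_mul] using this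
      exact ht.mul (hlim₂ i)
    have := h1.sub (h2.const_mul 2)
    simpa [hg, sub_eq_add_neg, neg_mul] using this
  -- sign of the limits
  have hL₁ : -2 * ∑ i, (a i - b i) * (b i - a i) * c < 0 := by
    have : (0 : ℝ) < ∑ i, (a i - b i) * (b i - a i) * c := by
      have hrw : ∀ i : Fin n, (a i - b i) * (b i - a i) * c = (-c) * (a i - b i) ^ 2 := by
        intro i; ring
      rw [Finset.sum_congr rfl fun i _ => hrw i]
      apply Finset.sum_pos'
      · intro i _
        have := sq_nonneg (a i - b i)
        nlinarith
      · obtain ⟨i, hi⟩ := hab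
        refine ⟨i, Finset.mem_univ i, ?_⟩
        have hne : a i - b i ≠ 0 := sub_ne_zero.mpr hi
        have hsq : (0 : ℝ) < (a i - b i) ^ 2 := pow_two_pos_of_ne_zero hne
        have hcpos : 0 < -c := by linarith
        exact mul_pos hcpos hsq
    nlinarith
  have hL₂ : 0 < -2 * ∑ i, (-(a i) - b i) * (-(b i) - a i) * c := by
    have : ∑ i, (-(a i) - b i) * (-(b i) - a i) * c < 0 := by
      have hrw : ∀ i : Fin n, (-(a i) - b i) * (-(b i) - a i) * c = -((-c) * (a i + b i) ^ 2) := by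
        intro i; ring
      rw [Finset.sum_congr rfl fun i _ => hrw i, Finset.sum_neg_distrib]
      rw [neg_lt_zero]
      apply Finset.sum_pos'
      · intro i _
        have := sq_nonneg (a i + b i)
        nlinarith
      · obtain ⟨j, hj⟩ := hab'
        refine ⟨j, Finset.mem_univ j, ?_⟩
        have hne : a j + b j ≠ 0 := fun hz => hj (by linarith)
        have hsq : (0 : ℝ) < (a j + b j) ^ 2 := pow_two_pos_of_ne_zero hne
        have hcpos : 0 < -c := by linarith
        exact mul_pos hcpos hsq
    nlinarith
  -- the two divergence claims
  have hbot : Tendsto h (𝓝[<] (1 : ℝ)) atBot := by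
    have : Tendsto (fun ρ => g ρ * ((1 - ρ ^ 2) ^ 2)⁻¹) (𝓝[<] (1 : ℝ)) atBot :=
      Tendsto.neg_mul_atTop hL₁ hgl₁ hinv₁
    apply this.congr'
    filter_upwards [hmem₁] with ρ hρ
    exact (heq ρ hρ).symm
  have htop : Tendsto h (𝓝[>] (-1 : ℝ)) atTop := by
    have : Tendsto (fun ρ => g ρ * ((1 - ρ ^ 2) ^ 2)⁻¹) (𝓝[>] (-1 : ℝ)) atTop :=
      Tendsto.pos_mul_atTop hL₂ hgl₂ hinv₂
    apply this.congr'
    filter_upwards [hmem₂] with ρ hρ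
    exact (heq ρ hρ).symm
  refine ⟨hbot, htop, ?_⟩
  -- continuity of h on Ioo (-1) 1
  have hhcont : ContinuousOn h (Ioo (-1 : ℝ) 1) := by
    have hexpr : ContinuousOn (fun ρ : ℝ => (n : ℝ) * ρ / (1 - ρ ^ 2)
        - (2 / (1 - ρ ^ 2) ^ 2) * ∑ i, (ρ * a i - b i) * (ρ * b i - a i)
            * r ((a i ^ 2 - 2 * ρ * a i * b i + b i ^ 2) / (1 - ρ ^ 2)))
        (Ioo (-1 : ℝ) 1) := by
      apply ContinuousOn.sub
      · exact ContinuousOn.div (by fun_prop) (by fun_prop)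
          fun ρ hρ => (hpos ρ hρ).ne'
      · apply ContinuousOn.mul
        · exact ContinuousOn.div continuousOn_const (by fun_prop)
            fun ρ hρ => pow_ne_zero 2 (hpos ρ hρ).ne'
        · apply continuousOn_finset_sum
          intro i _
          exact ContinuousOn.mul (by fun_prop) (hcont i)
    exact hexpr.congr fun ρ _ => hdef ρ
  -- find a point where h is positive (near -1) and one where h is negative (near 1)
  have hev₂ : ∀ᶠ ρ in 𝓝[>] (-1 : ℝ), 0 < h ρ ∧ ρ ∈ Ioo (-1 : ℝ) 1 :=
    (htop.eventually_gt_atTop 0).and hmem₂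
  obtain ⟨x₂, hx₂pos, hx₂mem⟩ := hev₂.exists
  have hmem₁' : Ioo x₂ 1 ∈ 𝓝[<] (1 : ℝ) :=
    Ioo_mem_nhdsLT_of_mem ⟨hx₂mem.2, le_refl 1⟩
  have hev₁ : ∀ᶠ ρ in 𝓝[<] (1 : ℝ), h ρ < 0 ∧ ρ ∈ Ioo x₂ 1 :=
    (hbot.eventually_lt_atBot 0).and hmem₁'
  obtain ⟨x₁, hx₁neg, hx₁mem⟩ := hev₁.exists
  have hle : x₂ ≤ x₁ := le_of_lt hx₁mem.1
  have hsub : Icc x₂ x₁ ⊆ Ioo (-1 : ℝ) 1 := fun y hy =>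
    ⟨lt_of_lt_of_le hx₂mem.1 hy.1, lt_of_le_of_lt hy.2 hx₁mem.2⟩
  have : (0 : ℝ) ∈ h '' Icc x₂ x₁ := by
    apply intermediate_value_Icc' hle (hhcont.mono hsub)
    exact ⟨le_of_lt hx₁neg, le_of_lt hx₂pos⟩
  obtain ⟨ρ₀, hρ₀mem, hρ₀⟩ := this
  exact ⟨ρ₀, hsub hρ₀mem, hρ₀⟩
end
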